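/- arXiv:2204.09428 — 7 statements merged into one kernel-verified Lean document; each statement's English description precedes it below -/
import Mathlib

section
/- For every function w : [−1,1] → ℝ that is square integrable, weakly differentiable, and satisfies ∫_{−1}^{1} (1−x²)|w'(x)|² dx < ∞, one has ∫_{−1}^{1} |w(x) − w̄|² dx ≤ (1/2) ∫_{−1}^{1} (1−x²)|w'(x)|² dx, where w̄ = (1/2) ∫_{−1}^{1} w(x) dx. -/
/-!
Put `g = w - w̄` and `G x = ∫_{-1}^x g`, so that `G(±1) = 0` and `|G x| ≤ M (1 - x²)`
for `M` a bound of `|g|`.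
With the boundary term `B = G g + x G² / (1 - x²)` one has the pointwise identity
`(1 - x²) w'² - 2 g² + 4 B' = (1 - x²) (w' + 2G/(1 - x²))² + 2 (g + 2xG/(1 - x²))²`.
Since `B` is continuous on `[-1, 1]` and vanishes at both ends, integrating gives
`2 ∫ g² ≤ ∫ (1 - x²) w'²`, with equality for `w = x`, where both squares vanish.
-/

open MeasureTheory Set Filter Topology

theorem abs_integral_neg_one_le_mul_one_sub_sq {f : ℝ → ℝ} {M x : ℝ}
    (hf : IntegrableOn f (Icc (-1) 1)) (hM : ∀ t ∈ Icc (-1 : ℝ) 1, |f t| ≤ M)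
    (hmean : ∫ t in (-1 : ℝ)..1, f t = 0) (hx : x ∈ Icc (-1 : ℝ) 1) :
    |∫ t in (-1 : ℝ)..x, f t| ≤ M * (1 - x ^ 2) := by
  have hM0 : 0 ≤ M := (abs_nonneg _).trans (hM 0 (by norm_num))
  have hbound : ∀ a ∈ Icc (-1 : ℝ) 1, ∀ b ∈ Icc (-1 : ℝ) 1,
      |∫ t in a..b, f t| ≤ M * |b - a| := fun a ha b hb =>
    intervalIntegral.norm_integral_le_of_norm_le_const (f := f) fun t ht =>
      hM t (uIcc_subset_Icc ha hb (uIoc_subset_uIcc ht))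
  have hint : ∀ b ∈ Icc (-1 : ℝ) 1, IntervalIntegrable f volume x b :=
    fun b hb => (hf.mono_set (uIcc_subset_Icc hx hb)).intervalIntegrable
  have hleft : |∫ t in (-1 : ℝ)..x, f t| ≤ M * (1 + x) := by
    have h := hbound (-1) (by norm_num) x hx
    rwa [sub_neg_eq_add, add_comm, abs_of_nonneg (a := 1 + x) (by linarith [hx.1])] at h
  have hright : |∫ t in (-1 : ℝ)..x, f t| ≤ M * (1 - x) := by
    have hsplit := intervalIntegral.integral_add_adjacent_intervals
      (hint (-1) (by norm_num)).symm (hint 1 (by norm_num))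
    rw [hmean, add_eq_zero_iff_eq_neg] at hsplit
    simpa [hsplit, abs_of_nonneg (sub_nonneg.mpr hx.2)] using hbound x hx 1 (by norm_num)
  rcases le_total 0 x with h | h
  · nlinarith [mul_nonneg (mul_nonneg hM0 (sub_nonneg.mpr hx.2)) h]
  · nlinarith [mul_nonneg (mul_nonneg hM0 (neg_le_iff_add_nonneg'.mp hx.1)) (neg_nonneg.mpr h)]

theorem continuousOn_mul_sq_div_one_sub_sq {G : ℝ → ℝ} {M : ℝ}
    (hG : ContinuousOn G (Icc (-1) 1)) (hGM : ∀ x ∈ Icc (-1 : ℝ) 1, |G x| ≤ M * (1 - x ^ 2)) :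
    ContinuousOn (fun x => x * G x ^ 2 / (1 - x ^ 2)) (Icc (-1) 1) := by
  intro x hx
  by_cases hx0 : 1 - x ^ 2 = 0
  · -- at `x = ±1` the quotient is `0` by the convention `a / 0 = 0`
    have hle : ∀ y ∈ Icc (-1 : ℝ) 1, ‖y * G y ^ 2 / (1 - y ^ 2)‖ ≤ M ^ 2 * (1 - y ^ 2) := by
      intro y hy
      have hy2 : 0 ≤ 1 - y ^ 2 := by nlinarith [hy.1, hy.2]
      rcases hy2.eq_or_lt with hy0 | hy0
      · simp [← hy0]
      have hGy : |G y| ^ 2 ≤ (M * (1 - y ^ 2)) ^ 2 := pow_le_pow_left₀ (abs_nonneg _) (hGM y hy) 2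
      rw [Real.norm_eq_abs, abs_div, abs_mul, abs_pow, abs_of_pos hy0, div_le_iff₀ hy0]
      nlinarith [abs_le.mpr hy, abs_nonneg y, sq_nonneg (G y)]
    have hlim : Tendsto (fun y : ℝ => M ^ 2 * (1 - y ^ 2)) (𝓝[Icc (-1) 1] x) (𝓝 0) := by
      have : Continuous (fun y : ℝ => M ^ 2 * (1 - y ^ 2)) := by fun_prop
      simpa [ContinuousWithinAt, hx0] using this.continuousWithinAt (s := Icc (-1) 1) (x := x)
    rw [ContinuousWithinAt, hx0, div_zero]
    exact squeeze_zero_norm' (eventually_nhdsWithin_of_forall hle) hlim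
  · exact (continuousWithinAt_id.mul ((hG x hx).pow 2)).div
      (continuousWithinAt_const.sub (continuousWithinAt_id.pow 2)) hx0

theorem hasDerivAt_mul_add_mul_sq_div_one_sub_sq {G g : ℝ → ℝ} {x d : ℝ}
    (hG : HasDerivAt G (g x) x) (hg : HasDerivAt g d x) (hx : 1 - x ^ 2 ≠ 0) :
    HasDerivAt (fun y => G y * g y + y * G y ^ 2 / (1 - y ^ 2))
      (g x ^ 2 + G x * d + (1 + x ^ 2) * G x ^ 2 / (1 - x ^ 2) ^ 2
        + 2 * x * G x * g x / (1 - x ^ 2)) x := by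
  have hden : HasDerivAt (fun y : ℝ => 1 - y ^ 2) (-(2 * x)) x := by
    simpa using (hasDerivAt_pow 2 x).const_sub 1
  have hnum := (hasDerivAt_id' x).fun_mul (hG.fun_pow 2)
  refine ((hG.fun_mul hg).fun_add (hnum.fun_div hden hx)).congr_deriv ?_
  field_simp
  ring

theorem one_sub_sq_mul_sq_sub_two_mul_sq_add_eq (x G g d : ℝ) (hx : 1 - x ^ 2 ≠ 0) :
    (1 - x ^ 2) * d ^ 2 - 2 * g ^ 2 + 4 * (g ^ 2 + G * d
      + (1 + x ^ 2) * G ^ 2 / (1 - x ^ 2) ^ 2 + 2 * x * G * g / (1 - x ^ 2)) =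
      (1 - x ^ 2) * (d + 2 * G / (1 - x ^ 2)) ^ 2 + 2 * (g + 2 * x * G / (1 - x ^ 2)) ^ 2 := by
  field_simp
  ring

theorem two_mul_integral_sq_le_integral_one_sub_sq_mul_deriv_sq {f f' : ℝ → ℝ}
    (hf : ContinuousOn f (Icc (-1) 1)) (hf' : ∀ x ∈ Ioo (-1 : ℝ) 1, HasDerivAt f (f' x) x)
    (hmean : ∫ x in (-1 : ℝ)..1, f x = 0)
    (hint : IntegrableOn (fun x => (1 - x ^ 2) * f' x ^ 2) (Icc (-1) 1)) :
    2 * ∫ x in (-1 : ℝ)..1, f x ^ 2 ≤ ∫ x in (-1 : ℝ)..1, (1 - x ^ 2) * f' x ^ 2 := by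
  obtain ⟨M, hM⟩ := isCompact_Icc.exists_bound_of_continuousOn hf
  have hfI : IntegrableOn f (Icc (-1) 1) := hf.integrableOn_Icc
  have hf2I : IntegrableOn (fun x => 2 * f x ^ 2) (Icc (-1) 1) :=
    (hf.pow 2).integrableOn_Icc.const_mul 2
  set G : ℝ → ℝ := fun x => ∫ t in (-1 : ℝ)..x, f t
  have hGM : ∀ x ∈ Icc (-1 : ℝ) 1, |G x| ≤ M * (1 - x ^ 2) := fun x hx =>
    abs_integral_neg_one_le_mul_one_sub_sq hfI hM hmean hx
  have hGc : ContinuousOn G (Icc (-1) 1) := by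
    simpa using intervalIntegral.continuousOn_primitive_interval (a := -1) (b := 1)
      (by simpa using hfI)
  have hG' : ∀ x ∈ Ioo (-1 : ℝ) 1, HasDerivAt G (f x) x := fun x hx =>
    intervalIntegral.integral_hasDerivAt_right
      ((hfI.mono_set (uIcc_subset_Icc (by norm_num) (Ioo_subset_Icc_self hx))).intervalIntegrable)
      ((hf.mono Ioo_subset_Icc_self).stronglyMeasurableAtFilter isOpen_Ioo x hx)
      (hf.continuousAt (Icc_mem_nhds hx.1 hx.2))
  set B : ℝ → ℝ := fun x => G x * f x + x * G x ^ 2 / (1 - x ^ 2)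
  have hBc : ContinuousOn B (Icc (-1) 1) :=
    (hGc.mul hf).add (continuousOn_mul_sq_div_one_sub_sq hGc hGM)
  have hB : B 1 = 0 ∧ B (-1) = 0 := by simp [B, G, hmean]
  have hlt : ∀ x ∈ Ioo (-1 : ℝ) 1, 0 < 1 - x ^ 2 := fun x hx => by nlinarith [hx.1, hx.2]
  have key := intervalIntegral.sub_le_integral_of_hasDeriv_right_of_le (by norm_num)
    (φ := fun x => (1 - x ^ 2) * f' x ^ 2 - 2 * f x ^ 2)
    (hBc.const_smul (4 : ℝ)).neg
    (fun x hx => (((hasDerivAt_mul_add_mul_sq_div_one_sub_sq (hG' x hx) (hf' x hx)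
      (hlt x hx).ne').const_mul 4).neg).hasDerivWithinAt)
    (hint.sub hf2I) fun x hx => by
      have := one_sub_sq_mul_sq_sub_two_mul_sq_add_eq x (G x) (f x) (f' x) (hlt x hx).ne'
      nlinarith [mul_nonneg (hlt x hx).le (sq_nonneg (f' x + 2 * G x / (1 - x ^ 2))),
        sq_nonneg (f x + 2 * x * G x / (1 - x ^ 2))]
  rw [intervalIntegral.integral_sub
    ((intervalIntegrable_iff_integrableOn_Icc_of_le (by norm_num)).2 hint)
    ((intervalIntegrable_iff_integrableOn_Icc_of_le (by norm_num)).2 hf2I),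
    intervalIntegral.integral_const_mul] at key
  simp only [Pi.neg_apply, Pi.smul_apply, hB, smul_zero, neg_zero, sub_zero] at key
  linarith

theorem stmt2_general (w : ℝ → ℝ)
    (hdiff : DifferentiableOn ℝ w (Set.Icc (-1:ℝ) 1))
    (hw' : IntegrableOn
      (fun x => (1 - x ^ 2) * (derivWithin w (Set.Icc (-1:ℝ) 1) x) ^ 2)
      (Set.Icc (-1:ℝ) 1)) :
    (∫ x in Set.Icc (-1:ℝ) 1,
        (w x - (1 / 2) * ∫ y in Set.Icc (-1:ℝ) 1, w y) ^ 2) ≤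
      (1 / 2) * ∫ x in Set.Icc (-1:ℝ) 1,
        (1 - x ^ 2) * (derivWithin w (Set.Icc (-1:ℝ) 1) x) ^ 2 := by
  set c := (1 / 2) * ∫ y in Icc (-1 : ℝ) 1, w y
  have hw : ContinuousOn w (Icc (-1) 1) := hdiff.continuousOn
  have hderiv : ∀ x ∈ Ioo (-1 : ℝ) 1,
      HasDerivAt (fun y => w y - c) (derivWithin w (Icc (-1) 1) x) x := fun x hx => by
    have hnhds := Icc_mem_nhds hx.1 hx.2
    rw [derivWithin_of_mem_nhds hnhds]
    exact ((hdiff x (Ioo_subset_Icc_self hx)).differentiableAt hnhds).hasDerivAt.sub_const c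
  have hmean : ∫ x in (-1 : ℝ)..1, (w x - c) = 0 := by
    rw [intervalIntegral.integral_sub (hw.intervalIntegrable_of_Icc (by norm_num))
      intervalIntegrable_const, intervalIntegral.integral_of_le (by norm_num),
      ← integral_Icc_eq_integral_Ioc]
    simp only [c, intervalIntegral.integral_const]
    norm_num
    ring
  have := two_mul_integral_sq_le_integral_one_sub_sq_mul_deriv_sq
    (f := fun x => w x - c) (hw.sub continuousOn_const) hderiv hmean hw'
  simp only [intervalIntegral.integral_of_le (show (-1 : ℝ) ≤ 1 by norm_num),
    ← integral_Icc_eq_integral_Ioc] at this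
  linarith

theorem stmt2 (w : ℝ → ℝ)
    (hdiff : DifferentiableOn ℝ w (Set.Icc (-1:ℝ) 1))
    (hw2 : IntegrableOn (fun x => (w x) ^ 2) (Set.Icc (-1:ℝ) 1))
    (hw' : IntegrableOn
      (fun x => (1 - x ^ 2) * (derivWithin w (Set.Icc (-1:ℝ) 1) x) ^ 2)
      (Set.Icc (-1:ℝ) 1)) :
    (∫ x in Set.Icc (-1:ℝ) 1,
        (w x - (1 / 2) * ∫ y in Set.Icc (-1:ℝ) 1, w y) ^ 2) ≤
      (1 / 2) * ∫ x in Set.Icc (-1:ℝ) 1,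
        (1 - x ^ 2) * (derivWithin w (Set.Icc (-1:ℝ) 1) x) ^ 2 :=
  stmt2_general w hdiff hw'
end

section
/- Fix γ > 1 and v₋ > 0. There exists a constant C > 0 such that for all real numbers v, w with 0 < w < 2v₋ and 0 < v ≤ 3v₋, one has |v − w|² ≤ C · Q(v|w) and |v − w|² ≤ C · p(v|w). -/
/-!
Both `Q` and `p` are powers `x ↦ c x^a` with `a ≤ 0` and `c a (a - 1) > 0`, so their second
derivatives `c a (a - 1) x^(a-2)` are bounded below by a positive constant on any bounded interval
`(0, R)`; here `R = 4 v₋` contains every admissible `v` and `w`. A function whose second derivative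
is at least `m` lies above each tangent line by at least `m/2 · (v - w)²`, because `f - m/2 · x²`
is convex.
-/

open Set

theorem ConvexOn.add_mul_sub_le_of_hasDerivAt {S : Set ℝ} {f : ℝ → ℝ} {f' v w : ℝ}
    (hf : ConvexOn ℝ S f) (hv : v ∈ S) (hw : w ∈ S) (hf' : HasDerivAt f f' w) :
    f w + f' * (v - w) ≤ f v := by
  rcases lt_trichotomy v w with h | rfl | h
  · have := hf.slope_le_of_hasDerivAt hv hw h hf'
    rw [slope_def_field, div_le_iff₀ (sub_pos.2 h)] at this
    linarith
  · simp
  · have := hf.le_slope_of_hasDerivAt hw hv h hf'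
    rw [slope_def_field, le_div_iff₀ (sub_pos.2 h)] at this
    linarith

theorem half_mul_sq_le_sub_sub_mul_of_le_deriv2 {S : Set ℝ} (hSc : Convex ℝ S) (hSo : IsOpen S)
    {f f' f'' : ℝ → ℝ} {m : ℝ}
    (hf : ∀ x ∈ S, HasDerivAt f (f' x) x) (hf' : ∀ x ∈ S, HasDerivAt f' (f'' x) x)
    (hm : ∀ x ∈ S, m ≤ f'' x) {v w : ℝ} (hv : v ∈ S) (hw : w ∈ S) :
    m / 2 * (v - w) ^ 2 ≤ f v - f w - f' w * (v - w) := by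
  have hg : ∀ x ∈ S, HasDerivAt (fun x => f x - m / 2 * x ^ 2) (f' x - m * x) x := fun x hx => by
    refine ((hf x hx).sub ((hasDerivAt_pow 2 x).const_mul (m / 2))).congr_deriv ?_
    norm_num
    ring
  have hg' : ∀ x ∈ S, HasDerivAt (fun x => f' x - m * x) (f'' x - m) x := fun x hx =>
    ((hf' x hx).sub ((hasDerivAt_id x).const_mul m)).congr_deriv (by rw [mul_one])
  have hconv : ConvexOn ℝ S (fun x => f x - m / 2 * x ^ 2) := by
    refine convexOn_of_hasDerivWithinAt2_nonneg hSc (f' := fun x => f' x - m * x)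
      (f'' := fun x => f'' x - m)
      (fun x hx => (hg x hx).continuousAt.continuousWithinAt) ?_ ?_ ?_ <;>
      rw [hSo.interior_eq]
    · exact fun x hx => (hg x hx).hasDerivWithinAt
    · exact fun x hx => (hg' x hx).hasDerivWithinAt
    · exact fun x hx => sub_nonneg.2 (hm x hx)
  have := hconv.add_mul_sub_le_of_hasDerivAt hv hw (hg w hw)
  nlinarith

theorem Real.mul_sq_le_rpow_sub_rpow_sub_mul {a R v w : ℝ} (ha : 0 ≤ a * (a - 1)) (ha₂ : a ≤ 2)
    (hv : v ∈ Ioo 0 R) (hw : w ∈ Ioo 0 R) :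
    a * (a - 1) * R ^ (a - 2) / 2 * (v - w) ^ 2 ≤ v ^ a - w ^ a - a * w ^ (a - 1) * (v - w) := by
  refine half_mul_sq_le_sub_sub_mul_of_le_deriv2 (convex_Ioo 0 R) isOpen_Ioo
    (f := fun x => x ^ a) (f' := fun x => a * x ^ (a - 1))
    (f'' := fun x => a * (a - 1) * x ^ (a - 2)) (fun x hx => ?_) (fun x hx => ?_)
    (fun x hx => ?_) hv hw
  · exact Real.hasDerivAt_rpow_const (Or.inl hx.1.ne')
  · refine ((Real.hasDerivAt_rpow_const (Or.inl hx.1.ne')).const_mul a).congr_deriv ?_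
    rw [sub_sub, one_add_one_eq_two, mul_assoc]
  · exact mul_le_mul_of_nonneg_left (Real.rpow_le_rpow_of_nonpos hx.1 hx.2.le (by linarith)) ha

theorem relEnergy_ge {γ R v w : ℝ} (hγ : 1 < γ) (hv : v ∈ Ioo 0 R) (hw : w ∈ Ioo 0 R) :
    γ * R ^ (-γ - 1) / 2 * (v - w) ^ 2 ≤
      (v ^ (1 - γ) - w ^ (1 - γ)) / (γ - 1) + w ^ (-γ) * (v - w) := by
  have h := Real.mul_sq_le_rpow_sub_rpow_sub_mul (a := 1 - γ) (by nlinarith) (by linarith) hv hw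
  rw [show 1 - γ - 2 = -γ - 1 by ring, show 1 - γ - 1 = -γ by ring] at h
  have hγ₁ : 0 < γ - 1 := sub_pos.2 hγ
  rw [div_add' _ _ _ hγ₁.ne', le_div_iff₀ hγ₁]
  nlinarith

theorem relPressure_ge {γ R v w : ℝ} (hγ : 0 ≤ γ) (hv : v ∈ Ioo 0 R) (hw : w ∈ Ioo 0 R) :
    γ * (γ + 1) * R ^ (-γ - 2) / 2 * (v - w) ^ 2 ≤
      v ^ (-γ) - w ^ (-γ) + γ * w ^ (-γ - 1) * (v - w) := by
  have h := Real.mul_sq_le_rpow_sub_rpow_sub_mul (a := -γ) (by nlinarith) (by linarith) hv hw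
  linarith

theorem stmt4 (γ vm : ℝ) (hγ : 1 < γ) (hvm : 0 < vm) :
    ∃ C > (0:ℝ), ∀ v w : ℝ, 0 < w → w < 2 * vm → 0 < v → v ≤ 3 * vm →
      (v - w) ^ 2 ≤ C * ((v ^ (1 - γ) - w ^ (1 - γ)) / (γ - 1) + w ^ (-γ) * (v - w)) ∧
      (v - w) ^ 2 ≤ C * (v ^ (-γ) - w ^ (-γ) + γ * w ^ (-γ - 1) * (v - w)) := by
  set R := 4 * vm
  set mQ := γ * R ^ (-γ - 1) / 2
  set mp := γ * (γ + 1) * R ^ (-γ - 2) / 2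
  have hR : 0 < R := by positivity
  have hm : 0 < min mQ mp := lt_min (by positivity) (by positivity)
  refine ⟨(min mQ mp)⁻¹, inv_pos.2 hm, fun v w hw₀ hw hv₀ hv => ?_⟩
  have hvR : v ∈ Ioo 0 R := ⟨hv₀, by linarith⟩
  have hwR : w ∈ Ioo 0 R := ⟨hw₀, by linarith⟩
  simp only [le_inv_mul_iff₀ hm]
  exact ⟨(mul_le_mul_of_nonneg_right (min_le_left _ _) (sq_nonneg _)).trans
      (relEnergy_ge hγ hvR hwR),
    (mul_le_mul_of_nonneg_right (min_le_right _ _) (sq_nonneg _)).trans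
      (relPressure_ge (by linarith) hvR hwR)⟩
end

section
/- Fix γ > 1 and v₋ > 0. There exist constants C > 0 and δ* > 0 such that for every δ with 0 < δ < δ*, and for all v, w > 0 satisfying |p(v) − p(w)| < δ and |p(w) − p(v₋)| < δ, one has p(v|w) ≤ ( (γ+1)/(2γ) · 1/p(w) + Cδ ) · |p(v) − p(w)|². -/
/-!
Pass to the pressure variables `P = v^(-γ)`, `Q = w^(-γ)`, in which `v = V(P)` for
`V(P) = P^(-1/γ)`. Then `p(v|w) = -p'(w) · V(P|Q)`, and Taylor's theorem for `V` gives
`p(v|w) = (γ+1)/(2γ) · Q^(1+1/γ) ξ^(-1/γ-2) (P-Q)²` for some `ξ` between `P` and `Q`.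
At `ξ = Q` the weight `Q^(1+1/γ) ξ^(-1/γ-2)` is exactly `1/Q`; by convexity of `ξ ↦ ξ^(-1/γ-2)`
it exceeds `1/Q` by at most a constant times `|ξ - Q| ≤ |P - Q| < δ`, uniformly as long as
`P` and `Q` stay close to `p(v₋)`.
-/

open Set

section RpowTaylor

variable {r x y : ℝ}

theorem exists_rpow_sub_tangent_eq (hx : 0 < x) (hy : 0 < y) :
    ∃ ξ ∈ uIcc x y,
      y ^ r - x ^ r - r * x ^ (r - 1) * (y - x) = r * (r - 1) / 2 * ξ ^ (r - 2) * (y - x) ^ 2 := by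
  rcases eq_or_ne x y with rfl | hxy
  · exact ⟨x, left_mem_uIcc, by ring⟩
  have hne : ∀ z ∈ uIcc x y, z ≠ 0 := fun z hz => ((lt_min hx hy).trans_le hz.1).ne'
  obtain ⟨ξ, hξ, h⟩ := taylor_mean_remainder_lagrange_iteratedDeriv (f := fun z => z ^ r)
    (n := 1) hxy fun z hz => (Real.contDiffAt_rpow_const_of_ne (hne z hz)).contDiffWithinAt
  refine ⟨ξ, Ioo_subset_Icc_self hξ, ?_⟩
  have hderiv : derivWithin (fun z => z ^ r) (uIcc x y) x = r * x ^ (r - 1) :=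
    (Real.hasDerivAt_rpow_const (Or.inl hx.ne')).hasDerivWithinAt.derivWithin
      (uniqueDiffOn_uIcc hxy x left_mem_uIcc)
  rw [iteratedDeriv_eq_iterate, Real.iter_deriv_rpow_const] at h
  simp only [taylorWithinEval_succ, taylor_within_zero_eval, CharP.cast_eq_zero, zero_add,
    Nat.factorial_zero, Nat.cast_one, mul_one, inv_one, pow_one, one_mul,
    iteratedDerivWithin_one, hderiv, smul_eq_mul, Nat.reduceAdd, descPochhammer_succ_right,
    descPochhammer_zero, sub_zero, Polynomial.eval_mul, Polynomial.eval_X, Polynomial.eval_sub,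
    Polynomial.eval_one, Nat.cast_ofNat, Nat.factorial_two] at h
  linear_combination h

theorem rpow_add_mul_sub_le (hr : r ≤ 0) (hx : 0 < x) (hy : 0 < y) :
    x ^ r + r * x ^ (r - 1) * (y - x) ≤ y ^ r := by
  obtain ⟨ξ, hξ, h⟩ := exists_rpow_sub_tangent_eq (r := r) hx hy
  have hξ₀ : 0 < ξ := (lt_min hx hy).trans_le hξ.1
  have hr' : 0 ≤ r * (r - 1) := mul_nonneg_of_nonpos_of_nonpos hr (by linarith)
  have hremainder : 0 ≤ r * (r - 1) / 2 * ξ ^ (r - 2) * (y - x) ^ 2 := by positivity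
  linarith

end RpowTaylor

theorem rpow_mul_rpow_le_inv_add {a m M Q ξ δ : ℝ} (ha : 0 ≤ a) (hm : 0 < m) (hQ : 0 < Q)
    (hQM : Q ≤ M) (hmξ : m ≤ ξ) (hξQ : |Q - ξ| ≤ δ) :
    Q ^ (1 + a) * ξ ^ (-a - 2) ≤ Q⁻¹ + M ^ (1 + a) * ((a + 2) * m ^ (-a - 3)) * δ := by
  have hξ : 0 < ξ := hm.trans_le hmξ
  have htangent := rpow_add_mul_sub_le (r := -a - 2) (by linarith) hξ hQ
  rw [show -a - 2 - 1 = -a - 3 by ring] at htangent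
  have hslope : (a + 2) * ξ ^ (-a - 3) * (Q - ξ) ≤ (a + 2) * m ^ (-a - 3) * δ :=
    calc (a + 2) * ξ ^ (-a - 3) * (Q - ξ) ≤ (a + 2) * ξ ^ (-a - 3) * |Q - ξ| := by
          gcongr; exact le_abs_self _
      _ ≤ (a + 2) * m ^ (-a - 3) * δ := by
          gcongr (a + 2) * ?_ * ?_
          exact Real.rpow_le_rpow_of_nonpos hm hmξ (by linarith : -a - 3 ≤ 0)
  have hQQ : Q ^ (1 + a) * Q ^ (-a - 2) = Q⁻¹ := by
    rw [← Real.rpow_add hQ, show 1 + a + (-a - 2) = -1 by ring, Real.rpow_neg_one]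
  have hδ : 0 ≤ δ := (abs_nonneg _).trans hξQ
  calc Q ^ (1 + a) * ξ ^ (-a - 2)
      ≤ Q ^ (1 + a) * (Q ^ (-a - 2) + (a + 2) * m ^ (-a - 3) * δ) := by
        gcongr; linarith
    _ = Q⁻¹ + Q ^ (1 + a) * ((a + 2) * m ^ (-a - 3)) * δ := by rw [mul_add, hQQ]; ring
    _ ≤ Q⁻¹ + M ^ (1 + a) * ((a + 2) * m ^ (-a - 3)) * δ := by gcongr

theorem exists_relPressure_eq {γ v w : ℝ} (hγ : 0 < γ) (hv : 0 < v) (hw : 0 < w) :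
    ∃ ξ ∈ uIcc (w ^ (-γ)) (v ^ (-γ)),
      v ^ (-γ) - w ^ (-γ) + γ * w ^ (-γ - 1) * (v - w) =
        (γ + 1) / (2 * γ) * (w ^ (-γ)) ^ (1 + γ⁻¹) * ξ ^ (-γ⁻¹ - 2) *
          (v ^ (-γ) - w ^ (-γ)) ^ 2 := by
  have hvolume : ∀ {u : ℝ}, 0 < u → (u ^ (-γ)) ^ (-γ⁻¹) = u := fun hu => by
    rw [← Real.rpow_mul hu.le, neg_mul_neg, mul_inv_cancel₀ hγ.ne', Real.rpow_one]
  have hslope : (w ^ (-γ)) ^ (1 + γ⁻¹) = w ^ (-γ - 1) := by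
    rw [← Real.rpow_mul hw.le]; congr 1; field_simp; ring
  have hslope_inv : (w ^ (-γ)) ^ (1 + γ⁻¹) * (w ^ (-γ)) ^ (-γ⁻¹ - 1) = 1 := by
    rw [← Real.rpow_add (by positivity), show 1 + γ⁻¹ + (-γ⁻¹ - 1) = 0 by ring, Real.rpow_zero]
  obtain ⟨ξ, hξ, h⟩ := exists_rpow_sub_tangent_eq (r := -γ⁻¹)
    (Real.rpow_pos_of_pos hw (-γ)) (Real.rpow_pos_of_pos hv (-γ))
  refine ⟨ξ, hξ, ?_⟩
  rw [hvolume hv, hvolume hw] at h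
  rw [← hslope]
  set A := (w ^ (-γ)) ^ (1 + γ⁻¹)
  set B := (w ^ (-γ)) ^ (-γ⁻¹ - 1)
  set X := ξ ^ (-γ⁻¹ - 2)
  -- the Taylor expansion of `V(P) = P^(-1/γ)` at `Q`, multiplied by `-p'(w) = γ Q^(1+1/γ)`
  linear_combination (norm := skip) (γ * A) * h - (v ^ (-γ) - w ^ (-γ)) * hslope_inv
  field_simp
  ring

theorem stmt6 (γ vm : ℝ) (hγ : 1 < γ) (hvm : 0 < vm) :
    ∃ C > (0:ℝ), ∃ δstar > (0:ℝ), ∀ δ : ℝ, 0 < δ → δ < δstar →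
      ∀ v w : ℝ, 0 < v → 0 < w →
        |v ^ (-γ) - w ^ (-γ)| < δ → |w ^ (-γ) - vm ^ (-γ)| < δ →
        v ^ (-γ) - w ^ (-γ) + γ * w ^ (-γ - 1) * (v - w) ≤
          ((γ + 1) / (2 * γ) * (1 / w ^ (-γ)) + C * δ) * |v ^ (-γ) - w ^ (-γ)| ^ 2 := by
  have hγ₀ : 0 < γ := by linarith
  set p₀ := vm ^ (-γ)
  have hp₀ : 0 < p₀ := by positivity
  set K := (2 * p₀) ^ (1 + γ⁻¹) * ((γ⁻¹ + 2) * (p₀ / 2) ^ (-γ⁻¹ - 3))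
  refine ⟨(γ + 1) / (2 * γ) * K, by positivity, p₀ / 4, by positivity, ?_⟩
  intro δ _ hδstar v w hv hw hvw hwvm
  obtain ⟨ξ, hξ, hrel⟩ := exists_relPressure_eq hγ₀ hv hw
  set P := v ^ (-γ)
  set Q := w ^ (-γ)
  have hvw' := abs_lt.mp hvw
  have hwvm' := abs_lt.mp hwvm
  have hξ_lower : p₀ / 2 ≤ ξ := (le_min (by linarith) (by linarith)).trans hξ.1
  have hξQ : |Q - ξ| ≤ δ := by
    rw [abs_sub_comm]; exact (abs_sub_left_of_mem_uIcc hξ).trans hvw.le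
  have hweight := rpow_mul_rpow_le_inv_add (a := γ⁻¹) (M := 2 * p₀) (by positivity)
    (by positivity) (by positivity) (by linarith) hξ_lower hξQ
  rw [hrel, sq_abs, one_div]
  calc (γ + 1) / (2 * γ) * Q ^ (1 + γ⁻¹) * ξ ^ (-γ⁻¹ - 2) * (P - Q) ^ 2
      = (γ + 1) / (2 * γ) * (Q ^ (1 + γ⁻¹) * ξ ^ (-γ⁻¹ - 2)) * (P - Q) ^ 2 := by ring
    _ ≤ (γ + 1) / (2 * γ) * (Q⁻¹ + K * δ) * (P - Q) ^ 2 := by gcongr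
    _ = ((γ + 1) / (2 * γ) * Q⁻¹ + (γ + 1) / (2 * γ) * K * δ) * (P - Q) ^ 2 := by ring
end

section
/- Fix γ > 1 and v₋ > 0. There exists δ* > 0 such that for every δ with 0 < δ < δ*, and for all v, w > 0 satisfying |p(v) − p(w)| < δ and |p(w) − p(v₋)| < δ, one has Q(v|w) ≥ |p(v) − p(w)|² / (2γ p(w)^{1+1/γ}) − ((1+γ)/(3γ²)) · (p(v) − p(w))³ / p(w)^{2+1/γ}. -/
/-!
In the pressure variables `p = v^(-γ)`, `q = w^(-γ)`, with `b = 1/γ` and `t = p/q`, the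
difference of the two sides equals `q^(1-b) g(t)` for an explicit function `g = pressureDefect b`.
The functions `g`, `g'`, `g''`, `g'''` all vanish at `t = 1`, and
`g''''(t) = b(1+b)(2+b) t^(-4-b) (3 + b - bt) ≥ 0` for `0 < t < 3`. So on `(0, 3)` both `g''` and
`g` have a monotone derivative vanishing at `1` together with themselves, hence are nonnegative.
Taking `δ* = p(v₋)/2` keeps `p(v)/p(w)` below `2`.
-/

open Set Real

theorem monotoneOn_of_hasDerivAt_nonneg {f f' : ℝ → ℝ} {D : Set ℝ} (hD : Convex ℝ D)
    (hf : ∀ x ∈ D, HasDerivAt f (f' x) x) (hf'₀ : ∀ x ∈ D, 0 ≤ f' x) :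
    MonotoneOn f D :=
  monotoneOn_of_hasDerivWithinAt_nonneg hD (fun x hx ↦ (hf x hx).continuousAt.continuousWithinAt)
    (fun x hx ↦ (hf x (interior_subset hx)).hasDerivWithinAt)
    (fun x hx ↦ hf'₀ x (interior_subset hx))

theorem nonneg_of_hasDerivAt_of_monotoneOn {f f' : ℝ → ℝ} {D : Set ℝ} (hD : D.OrdConnected)
    {c : ℝ} (hc : c ∈ D) (hf : ∀ x ∈ D, HasDerivAt f (f' x) x) (hf' : MonotoneOn f' D)
    (hfc : f c = 0) (hf'c : f' c = 0) {x : ℝ} (hx : x ∈ D) : 0 ≤ f x := by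
  have hderiv : ∀ {a b}, a ∈ D → b ∈ D → ∀ y ∈ Ioo a b, HasDerivAt f (f' y) y :=
    fun ha hb y hy ↦ hf y (hD.out ha hb (Ioo_subset_Icc_self hy))
  have hcont : ∀ {a b}, a ∈ D → b ∈ D → ContinuousOn f (Icc a b) :=
    fun ha hb y hy ↦ (hf y (hD.out ha hb hy)).continuousAt.continuousWithinAt
  rcases lt_trichotomy x c with hxc | rfl | hcx
  · obtain ⟨ξ, hξ, hslope⟩ := exists_hasDerivAt_eq_slope f f' hxc (hcont hx hc) (hderiv hx hc)
    have : f' ξ ≤ 0 := hf'c ▸ hf' (hD.out hx hc (Ioo_subset_Icc_self hξ)) hc hξ.2.le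
    rw [hslope, div_le_iff₀ (sub_pos.2 hxc), zero_mul, hfc] at this
    linarith
  · exact hfc.ge
  · obtain ⟨ξ, hξ, hslope⟩ := exists_hasDerivAt_eq_slope f f' hcx (hcont hc hx) (hderiv hc hx)
    have : 0 ≤ f' ξ := hf'c ▸ hf' hc (hD.out hc hx (Ioo_subset_Icc_self hξ)) hξ.1.le
    rwa [hslope, le_div_iff₀ (sub_pos.2 hcx), zero_mul, hfc, sub_zero] at this

noncomputable def pressureDefect (b t : ℝ) : ℝ :=
  b * (t ^ (1 - b) - 1) / (1 - b) + t ^ (-b) - 1 - b * (t - 1) ^ 2 / 2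
    + b * (1 + b) * (t - 1) ^ 3 / 3

noncomputable def pressureDefect₁ (b t : ℝ) : ℝ :=
  t ^ (-b) - t ^ (-b - 1) - (t - 1) + (1 + b) * (t - 1) ^ 2

noncomputable def pressureDefect₂ (b t : ℝ) : ℝ :=
  -b * t ^ (-b - 1) + (b + 1) * t ^ (-b - 2) - 1 + 2 * (1 + b) * (t - 1)

noncomputable def pressureDefect₃ (b t : ℝ) : ℝ :=
  b * (b + 1) * t ^ (-b - 2) - (b + 1) * (b + 2) * t ^ (-b - 3) + 2 * (1 + b)

theorem hasDerivAt_pressureDefect {b t : ℝ} (hb : b ≠ 1) (ht : 0 < t) :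
    HasDerivAt (pressureDefect b) (b * pressureDefect₁ b t) t := by
  have h := (((((((hasDerivAt_rpow_const (p := 1 - b) (Or.inl ht.ne')).sub_const 1).const_mul b
    ).div_const (1 - b)).add (hasDerivAt_rpow_const (p := -b) (Or.inl ht.ne'))).sub_const 1).sub
      ((((hasDerivAt_id t).sub_const 1).pow 2).const_mul b |>.div_const 2)).add
    ((((hasDerivAt_id t).sub_const 1).pow 3).const_mul (b * (1 + b)) |>.div_const 3)
  refine h.congr_deriv ?_
  have : 1 - b ≠ 0 := sub_ne_zero.2 hb.symm
  simp only [pressureDefect₁, id]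
  field_simp
  ring_nf

theorem hasDerivAt_pressureDefect₁ (b : ℝ) {t : ℝ} (ht : 0 < t) :
    HasDerivAt (pressureDefect₁ b) (pressureDefect₂ b t) t := by
  have h := (((hasDerivAt_rpow_const (p := -b) (Or.inl ht.ne')).sub
      (hasDerivAt_rpow_const (p := -b - 1) (Or.inl ht.ne'))).sub
      ((hasDerivAt_id t).sub_const 1)).add
    ((((hasDerivAt_id t).sub_const 1).pow 2).const_mul (1 + b))
  refine h.congr_deriv ?_
  simp only [pressureDefect₂, id]
  ring_nf

theorem hasDerivAt_pressureDefect₂ (b : ℝ) {t : ℝ} (ht : 0 < t) :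
    HasDerivAt (pressureDefect₂ b) (pressureDefect₃ b t) t := by
  have h := ((((hasDerivAt_rpow_const (p := -b - 1) (Or.inl ht.ne')).const_mul (-b)).add
      ((hasDerivAt_rpow_const (p := -b - 2) (Or.inl ht.ne')).const_mul (b + 1))).sub_const 1).add
    (((hasDerivAt_id t).sub_const 1).const_mul (2 * (1 + b)))
  refine h.congr_deriv ?_
  simp only [pressureDefect₃]
  ring_nf

theorem hasDerivAt_pressureDefect₃ (b : ℝ) {t : ℝ} (ht : 0 < t) :
    HasDerivAt (pressureDefect₃ b)
      ((b + 1) * (b + 2) * t ^ (-b - 4) * (b + 3 - b * t)) t := by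
  have h := (((hasDerivAt_rpow_const (p := -b - 2) (Or.inl ht.ne')).const_mul (b * (b + 1))).sub
      ((hasDerivAt_rpow_const (p := -b - 3) (Or.inl ht.ne')).const_mul ((b + 1) * (b + 2)))
    ).add_const (2 * (1 + b))
  refine h.congr_deriv ?_
  rw [show -b - 2 - 1 = (-b - 4) + 1 by ring, rpow_add ht, rpow_one]
  ring_nf

theorem pressureDefect_nonneg {b t : ℝ} (hb₀ : 0 ≤ b) (hb₁ : b < 1) (ht : t ∈ Ioo (0 : ℝ) 3) :
    0 ≤ pressureDefect b t := by
  have one_mem : (1 : ℝ) ∈ Ioo (0 : ℝ) 3 := by norm_num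
  have mono₃ : MonotoneOn (pressureDefect₃ b) (Ioo 0 3) :=
    monotoneOn_of_hasDerivAt_nonneg (convex_Ioo 0 3)
      (fun s hs ↦ hasDerivAt_pressureDefect₃ b hs.1) fun s hs ↦ by
        have : 0 ≤ b + 3 - b * s := by nlinarith [hs.2]
        have := rpow_pos_of_pos hs.1 (-b - 4)
        positivity
  have nonneg₂ : ∀ s ∈ Ioo (0 : ℝ) 3, 0 ≤ pressureDefect₂ b s :=
    fun s hs ↦ nonneg_of_hasDerivAt_of_monotoneOn ordConnected_Ioo one_mem
      (fun r hr ↦ hasDerivAt_pressureDefect₂ b hr.1) mono₃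
      (by simp [pressureDefect₂]) (by simp [pressureDefect₃]; ring) hs
  have mono₁ : MonotoneOn (pressureDefect₁ b) (Ioo 0 3) :=
    monotoneOn_of_hasDerivAt_nonneg (convex_Ioo 0 3)
      (fun s hs ↦ hasDerivAt_pressureDefect₁ b hs.1) nonneg₂
  exact nonneg_of_hasDerivAt_of_monotoneOn ordConnected_Ioo one_mem
    (fun s hs ↦ hasDerivAt_pressureDefect hb₁.ne hs.1)
    (fun r hr s hs hrs ↦ mul_le_mul_of_nonneg_left (mono₁ hr hs hrs) hb₀)
    (by simp [pressureDefect]) (by simp [pressureDefect₁]) ht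

theorem relEnergy_pressure_sub_eq {γ p q : ℝ} (hγ₀ : γ ≠ 0) (hγ₁ : γ ≠ 1) (hp : 0 < p)
    (hq : 0 < q) :
    (p ^ (1 - 1 / γ) - q ^ (1 - 1 / γ)) / (γ - 1) + q * (p ^ (-(1 / γ)) - q ^ (-(1 / γ)))
      - ((p - q) ^ 2 / (2 * γ * q ^ (1 + 1 / γ))
        - (1 + γ) / (3 * γ ^ 2) * (p - q) ^ 3 / q ^ (2 + 1 / γ))
      = q ^ (1 - 1 / γ) * pressureDefect (1 / γ) (p / q) := by
  set t := p / q
  have ht : 0 < t := div_pos hp hq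
  have hpt : p = q * t := (mul_div_cancel₀ p hq.ne').symm
  have hγ₁' : γ - 1 ≠ 0 := sub_ne_zero.2 hγ₁
  have hb₁ : 1 - 1 / γ ≠ 0 := by
    rw [one_sub_div hγ₀]
    exact div_ne_zero hγ₁' hγ₀
  have split_one_sub (x : ℝ) (hx : 0 < x) : x ^ (1 - 1 / γ) = x * (x ^ (1 / γ))⁻¹ := by
    rw [sub_eq_add_neg, rpow_add hx, rpow_one, rpow_neg hx.le]
  have hq₁ : q ^ (1 + 1 / γ) = q * q ^ (1 / γ) := by rw [rpow_add hq, rpow_one]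
  have hq₂ : q ^ (2 + 1 / γ) = q * q * q ^ (1 / γ) := by
    rw [rpow_add hq, rpow_two, sq]
  have := rpow_pos_of_pos hq (1 / γ)
  have := rpow_pos_of_pos ht (1 / γ)
  rw [hpt, mul_rpow hq.le ht.le, mul_rpow hq.le ht.le, pressureDefect, split_one_sub q hq,
    split_one_sub t ht, hq₁, hq₂, rpow_neg hq.le, rpow_neg ht.le]
  field_simp
  ring

theorem rpow_neg_rpow_neg_inv {v γ : ℝ} (hv : 0 < v) (hγ : γ ≠ 0) :
    (v ^ (-γ)) ^ (-(1 / γ)) = v := by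
  rw [← rpow_mul hv.le, neg_mul_neg, mul_one_div_cancel hγ, rpow_one]

theorem rpow_neg_rpow_one_sub_inv {v γ : ℝ} (hv : 0 < v) (hγ : γ ≠ 0) :
    (v ^ (-γ)) ^ (1 - 1 / γ) = v ^ (1 - γ) := by
  rw [← rpow_mul hv.le]
  congr 1
  field_simp
  ring

theorem stmt7 (γ vm : ℝ) (hγ : 1 < γ) (hvm : 0 < vm) :
    ∃ δstar > (0:ℝ), ∀ δ : ℝ, 0 < δ → δ < δstar →
      ∀ v w : ℝ, 0 < v → 0 < w →
        |v ^ (-γ) - w ^ (-γ)| < δ → |w ^ (-γ) - vm ^ (-γ)| < δ →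
        (v ^ (1 - γ) - w ^ (1 - γ)) / (γ - 1) + w ^ (-γ) * (v - w) ≥
          |v ^ (-γ) - w ^ (-γ)| ^ 2 / (2 * γ * (w ^ (-γ)) ^ (1 + 1 / γ)) -
          (1 + γ) / (3 * γ ^ 2) * (v ^ (-γ) - w ^ (-γ)) ^ 3 / (w ^ (-γ)) ^ (2 + 1 / γ) := by
  have hγ₀ : γ ≠ 0 := by positivity
  refine ⟨vm ^ (-γ) / 2, by positivity, fun δ _ hδ v w hv hw hvw hwm ↦ ?_⟩
  have hp := rpow_pos_of_pos hv (-γ)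
  have hq := rpow_pos_of_pos hw (-γ)
  have ratio_mem : v ^ (-γ) / w ^ (-γ) ∈ Ioo (0 : ℝ) 3 := by
    rw [abs_lt] at hvw hwm
    exact ⟨div_pos hp hq, (div_lt_iff₀ hq).2 (by linarith)⟩
  have hb : 1 / γ < 1 := (div_lt_one (by positivity)).2 hγ
  have key := relEnergy_pressure_sub_eq hγ₀ hγ.ne' hp hq
  rw [rpow_neg_rpow_one_sub_inv hv hγ₀, rpow_neg_rpow_one_sub_inv hw hγ₀,
    rpow_neg_rpow_neg_inv hv hγ₀, rpow_neg_rpow_neg_inv hw hγ₀] at key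
  rw [sq_abs, ge_iff_le, ← sub_nonneg, key]
  exact mul_nonneg (rpow_pos_of_pos hw _).le (pressureDefect_nonneg (by positivity) hb ratio_mem)
end

section
/- Fix γ > 1 and v₋ > 0. There exist constants C > 0 and δ₀ > 0 such that for every v₊ > v₋ with 0 < δ := p(v₋) − p(v₊) ≤ δ₀, and for every v with v₋ < v < v₊, one has | (v − v₋)/(p(v) − p(v₋)) + (v − v₊)/(p(v₊) − p(v)) + (1/2) · p''(v₋)/(p'(v₋))² · (v₋ − v₊) | ≤ C δ². -/
/-! Substitute `u = p(v)`, so that `v = f(u)` with `f(u) = u ^ (-γ)⁻¹`. The first two terms become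
the difference of two slopes of `f`, which is `δ` times a second divided difference `≈ f''/2`,
while `p''/(2p'²)` at `v₋` equals `-f''/(2f')` at `u₋ = p(v₋)`, so the third term is
`≈ -(f''/2) δ`. Replacing `f` by its quadratic Taylor polynomial at `u₋` these cancel up to an
explicit multiple of `δ²`, and the Taylor remainder is Lipschitz with constant `O(δ²)` on
`[p(v₊), p(v₋)]` since `f'''` is bounded there. -/

open Set

section TaylorRemainder

variable {f f' f'' f''' : ℝ → ℝ} {a b x K M : ℝ}

theorem abs_sub_le_of_abs_deriv_le (hf : ∀ t ∈ Icc a b, HasDerivAt f (f' t) t)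
    (hK : ∀ t ∈ Icc a b, |f' t| ≤ K) {x y : ℝ} (hx : x ∈ Icc a b) (hy : y ∈ Icc a b) :
    |f y - f x| ≤ K * |y - x| := by
  simpa only [Real.norm_eq_abs] using
    (convex_Icc a b).norm_image_sub_le_of_norm_hasDerivWithin_le
      (fun t ht => (hf t ht).hasDerivWithinAt) hK hx hy

theorem abs_le_of_abs_deriv_le_of_eq_zero (hf : ∀ t ∈ Icc a b, HasDerivAt f (f' t) t)
    (hK : ∀ t ∈ Icc a b, |f' t| ≤ K) (hfb : f b = 0) (hx : x ∈ Icc a b) :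
    |f x| ≤ K * (b - a) := by
  have hb : b ∈ Icc a b := ⟨hx.1.trans hx.2, le_rfl⟩
  have hK₀ : 0 ≤ K := (abs_nonneg _).trans (hK b hb)
  calc |f x| = |f x - f b| := by rw [hfb, sub_zero]
    _ ≤ K * |x - b| := abs_sub_le_of_abs_deriv_le hf hK hb hx
    _ ≤ K * (b - a) := by
      gcongr
      exact abs_sub_le_iff.2 ⟨by linarith [hx.1, hx.2], by linarith [hx.1]⟩

noncomputable def quadTaylorRemainder (f : ℝ → ℝ) (d₁ d₂ b t : ℝ) : ℝ :=
  f t - f b - d₁ * (t - b) - d₂ * (t - b) ^ 2 / 2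

theorem quadTaylorRemainder_self (f : ℝ → ℝ) (d₁ d₂ b : ℝ) :
    quadTaylorRemainder f d₁ d₂ b b = 0 := by
  simp [quadTaylorRemainder]

theorem quadTaylorRemainder_lipschitz (hf : ∀ t ∈ Icc a b, HasDerivAt f (f' t) t)
    (hf' : ∀ t ∈ Icc a b, HasDerivAt f' (f'' t) t)
    (hf'' : ∀ t ∈ Icc a b, HasDerivAt f'' (f''' t) t) (hM : ∀ t ∈ Icc a b, |f''' t| ≤ M)
    {x y : ℝ} (hx : x ∈ Icc a b) (hy : y ∈ Icc a b) :
    |quadTaylorRemainder f (f' b) (f'' b) b y - quadTaylorRemainder f (f' b) (f'' b) b x|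
      ≤ M * (b - a) ^ 2 * |y - x| := by
  have h₂ : ∀ t ∈ Icc a b, |f'' t - f'' b| ≤ M * (b - a) := fun t ht =>
    abs_le_of_abs_deriv_le_of_eq_zero (f := fun s => f'' s - f'' b)
      (fun s hs => (hf'' s hs).sub_const _) hM (sub_self _) ht
  have h₁ : ∀ t ∈ Icc a b, |f' t - f' b - f'' b * (t - b)| ≤ M * (b - a) * (b - a) :=
    fun t ht => abs_le_of_abs_deriv_le_of_eq_zero (f := fun s => f' s - f' b - f'' b * (s - b))
      (fun s hs => ((hf' s hs).sub_const _).sub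
        (((hasDerivAt_id s).sub_const b).const_mul _) |>.congr_deriv (by simp)) h₂
      (by simp) ht
  have hR : ∀ t ∈ Icc a b, HasDerivAt (quadTaylorRemainder f (f' b) (f'' b) b)
      (f' t - f' b - f'' b * (t - b)) t := by
    intro t ht
    have hsq : HasDerivAt (fun s => (s - b) ^ 2) (2 * (t - b)) t := by
      simpa using ((hasDerivAt_id t).sub_const b).fun_pow 2
    exact ((((hf t ht).sub_const _).sub (((hasDerivAt_id t).sub_const b).const_mul _)).sub
      ((hsq.const_mul _).div_const 2)).congr_deriv (by ring)
  simpa only [sq, mul_assoc] using abs_sub_le_of_abs_deriv_le hR h₁ hx hy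

/-- The quadratic Taylor polynomial has second divided difference exactly `d₂ / 2`; what survives of
it is the `d₂² (b - a)² / (4 d₁)` term. -/
theorem slope_sub_slope_eq_quadTaylorRemainder (f : ℝ → ℝ) {d₁ d₂ a : ℝ} (hd₁ : d₁ ≠ 0)
    (hxa : x ≠ a) (hxb : x ≠ b) :
    let R := quadTaylorRemainder f d₁ d₂ b
    (f x - f b) / (x - b) - (f x - f a) / (x - a) - d₂ / (2 * d₁) * (f b - f a)
      = (R x - R b) / (x - b) - (R x - R a) / (x - a)
        + d₂ / (2 * d₁) * (d₂ / 2 * (b - a) ^ 2 + R a) := by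
  have : x - a ≠ 0 := sub_ne_zero.2 hxa
  have : x - b ≠ 0 := sub_ne_zero.2 hxb
  simp only [quadTaylorRemainder]
  field_simp
  ring

theorem abs_div_le_of_abs_le_mul {u w : ℝ} (h : |u| ≤ K * |w|) (hw : w ≠ 0) : |u / w| ≤ K := by
  rwa [abs_div, div_le_iff₀ (abs_pos.2 hw)]

theorem abs_slope_sub_slope_sub_le (hax : a < x) (hxb : x < b)
    (hf : ∀ t ∈ Icc a b, HasDerivAt f (f' t) t) (hf' : ∀ t ∈ Icc a b, HasDerivAt f' (f'' t) t)
    (hf'' : ∀ t ∈ Icc a b, HasDerivAt f'' (f''' t) t) (hM : ∀ t ∈ Icc a b, |f''' t| ≤ M)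
    (hd₁ : f' b ≠ 0) :
    |(f x - f b) / (x - b) - (f x - f a) / (x - a) - f'' b / (2 * f' b) * (f b - f a)|
      ≤ (2 * M + |f'' b / (2 * f' b)| * (|f'' b| / 2 + M * (b - a))) * (b - a) ^ 2 := by
  set R := quadTaylorRemainder f (f' b) (f'' b) b
  set k := f'' b / (2 * f' b)
  have ha : a ∈ Icc a b := ⟨le_rfl, by linarith⟩
  have hb : b ∈ Icc a b := ⟨by linarith, le_rfl⟩
  have hx : x ∈ Icc a b := ⟨hax.le, hxb.le⟩
  have hR : ∀ s ∈ Icc a b, ∀ t ∈ Icc a b, |R t - R s| ≤ M * (b - a) ^ 2 * |t - s| :=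
    fun s hs t ht => quadTaylorRemainder_lipschitz hf hf' hf'' hM hs ht
  have hxb' : |(R x - R b) / (x - b)| ≤ M * (b - a) ^ 2 :=
    abs_div_le_of_abs_le_mul (hR b hb x hx) (sub_ne_zero.2 hxb.ne)
  have hxa' : |(R x - R a) / (x - a)| ≤ M * (b - a) ^ 2 :=
    abs_div_le_of_abs_le_mul (hR a ha x hx) (sub_ne_zero.2 hax.ne')
  have hRa : |R a| ≤ M * (b - a) ^ 2 * (b - a) := by
    have h := hR b hb a ha
    rwa [show R b = 0 from quadTaylorRemainder_self _ _ _ _, sub_zero, abs_sub_comm,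
      abs_of_pos (by linarith : 0 < b - a)] at h
  have hquad : |f'' b / 2 * (b - a) ^ 2| = |f'' b| / 2 * (b - a) ^ 2 := by
    rw [abs_mul, abs_div, abs_two, abs_sq]
  rw [slope_sub_slope_eq_quadTaylorRemainder f hd₁ hax.ne' hxb.ne]
  calc _ ≤ |(R x - R b) / (x - b) - (R x - R a) / (x - a)|
          + |k| * |f'' b / 2 * (b - a) ^ 2 + R a| := by
        rw [← abs_mul]; exact abs_add_le _ _
    _ ≤ |(R x - R b) / (x - b)| + |(R x - R a) / (x - a)|
          + |k| * (|f'' b / 2 * (b - a) ^ 2| + |R a|) :=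
        add_le_add (abs_sub _ _) (mul_le_mul_of_nonneg_left (abs_add_le _ _) (abs_nonneg _))
    _ ≤ M * (b - a) ^ 2 + M * (b - a) ^ 2
          + |k| * (|f'' b| / 2 * (b - a) ^ 2 + M * (b - a) ^ 2 * (b - a)) := by
        rw [hquad]; gcongr
    _ = _ := by ring

end TaylorRemainder

theorem hasDerivAt_const_mul_rpow (c p : ℝ) {q x : ℝ} (hq : p - 1 = q) (hx : 0 < x) :
    HasDerivAt (fun t => c * t ^ p) (c * p * x ^ q) x := by
  simpa [hq, mul_assoc] using (Real.hasDerivAt_rpow_const (p := p) (Or.inl hx.ne')).const_mul c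

theorem exists_abs_rpow_slope_sub_slope_sub_le {α b : ℝ} (hα₀ : α ≠ 0) (hα₃ : α ≤ 3)
    (hb : 0 < b) :
    ∃ C, ∀ a x, b / 2 ≤ a → a < x → x < b →
      |(x ^ α - b ^ α) / (x - b) - (x ^ α - a ^ α) / (x - a)
          - (α - 1) / (2 * b) * (b ^ α - a ^ α)| ≤ C * (b - a) ^ 2 := by
  set M := |α * (α - 1) * (α - 2)| * (b / 2) ^ (α - 3)
  refine ⟨2 * M + |(α - 1) / (2 * b)| * (|α * (α - 1) * b ^ (α - 2)| / 2 + M * (b / 2)),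
    fun a x ha hax hxb => ?_⟩
  have hpos : ∀ t ∈ Icc a b, 0 < t := fun t ht => by linarith [ht.1]
  have hM : ∀ t ∈ Icc a b, |α * (α - 1) * (α - 2) * t ^ (α - 3)| ≤ M := by
    intro t ht
    rw [abs_mul, abs_of_pos (Real.rpow_pos_of_pos (hpos t ht) _)]
    exact mul_le_mul_of_nonneg_left
      (Real.rpow_le_rpow_of_nonpos (by positivity) (ha.trans ht.1) (by linarith)) (abs_nonneg _)
  have hk : α * (α - 1) * b ^ (α - 2) / (2 * (α * b ^ (α - 1))) = (α - 1) / (2 * b) := by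
    rw [show α - 1 = α - 2 + 1 by ring, Real.rpow_add_one hb.ne']
    have : b ^ (α - 2) ≠ 0 := (Real.rpow_pos_of_pos hb _).ne'
    field_simp
  have h := abs_slope_sub_slope_sub_le (f := fun t => t ^ α) (f' := fun t => α * t ^ (α - 1))
    (f'' := fun t => α * (α - 1) * t ^ (α - 2))
    (f''' := fun t => α * (α - 1) * (α - 2) * t ^ (α - 3)) hax hxb
    (fun t ht => Real.hasDerivAt_rpow_const (Or.inl (hpos t ht).ne'))
    (fun t ht => hasDerivAt_const_mul_rpow _ _ (by ring) (hpos t ht))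
    (fun t ht => hasDerivAt_const_mul_rpow _ _ (by ring) (hpos t ht)) hM
    (mul_ne_zero hα₀ (Real.rpow_pos_of_pos hb _).ne')
  simp only [hk] at h
  refine h.trans ?_
  gcongr
  linarith

/-- `p''/(2p'²)` at `v` equals `-f''/(2f')` at `p(v)` for the inverse `f(u) = u ^ (-γ)⁻¹` of
`p(v) = v ^ (-γ)`. -/
theorem half_pressure_curvature_eq {γ v : ℝ} (hγ : γ ≠ 0) (hv : 0 < v) :
    1 / 2 * (γ * (γ + 1) * v ^ (-γ - 2)) / (-(γ * v ^ (-γ - 1))) ^ 2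
      = -(((-γ)⁻¹ - 1) / (2 * v ^ (-γ))) := by
  rw [Real.rpow_sub hv, Real.rpow_sub hv, Real.rpow_one, Real.rpow_two]
  have : v ^ (-γ) ≠ 0 := (Real.rpow_pos_of_pos hv _).ne'
  field_simp
  ring

theorem stmt9 (γ vm : ℝ) (hγ : 1 < γ) (hvm : 0 < vm) :
    ∃ C > (0:ℝ), ∃ δ₀ > (0:ℝ), ∀ vp : ℝ, vm < vp →
      ∀ δ : ℝ, δ = vm ^ (-γ) - vp ^ (-γ) → 0 < δ → δ ≤ δ₀ →
        ∀ v : ℝ, vm < v → v < vp →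
          |(v - vm) / (v ^ (-γ) - vm ^ (-γ)) + (v - vp) / (vp ^ (-γ) - v ^ (-γ)) +
              (1 / 2) * (γ * (γ + 1) * vm ^ (-γ - 2)) / (-(γ * vm ^ (-γ - 1))) ^ 2 *
                (vm - vp)| ≤ C * δ ^ 2 := by
  have hγ₀ : -γ ≠ 0 := by linarith
  have hα : (-γ)⁻¹ ≤ 3 := (inv_lt_zero.2 (by linarith)).le.trans (by norm_num)
  obtain ⟨C, hC⟩ := exists_abs_rpow_slope_sub_slope_sub_le (inv_ne_zero hγ₀) hα
    (Real.rpow_pos_of_pos hvm (-γ))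
  refine ⟨max C 1, by positivity, vm ^ (-γ) / 2, by positivity, ?_⟩
  rintro vp hvp δ rfl - hδ₀ v hv hvvp
  have hv₀ : 0 < v := hvm.trans hv
  have h := hC (vp ^ (-γ)) (v ^ (-γ)) (by linarith)
    (Real.rpow_lt_rpow_of_neg hv₀ hvvp (by linarith))
    (Real.rpow_lt_rpow_of_neg hvm hv (by linarith))
  simp only [Real.rpow_rpow_inv hvm.le hγ₀, Real.rpow_rpow_inv hv₀.le hγ₀,
    Real.rpow_rpow_inv (hv₀.trans hvvp).le hγ₀] at h
  rw [half_pressure_curvature_eq (by linarith) hvm, ← neg_sub (v ^ (-γ)), div_neg]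
  refine (le_of_eq ?_).trans
    (h.trans (mul_le_mul_of_nonneg_right (le_max_left C 1) (sq_nonneg _)))
  congr 1
  ring
end

section
/- Let γ > 1, let μ > 0 and λ ∈ ℝ satisfy 2μ + 3λ ≥ 0 (so that 2μ + λ > 0), let 0 < v₋ < v₊, let u₁₊ ∈ ℝ, set σ* = √( (p(v₋) − p(v₊)) / (v₊ − v₋) ) > 0 and u₁₋ = u₁₊ + σ*(v₊ − v₋). Then there exist twice continuously differentiable functions v^s, u^s : ℝ → ℝ such that for all ξ ∈ ℝ: (i) −σ* (v^s)'(ξ) = (u^s)'(ξ); (ii) −σ* (u^s)'(ξ) + (p ∘ v^s)'(ξ) = (2μ + λ)(u^s)''(ξ); (iii) v^s(ξ) → v₋ and u^s(ξ) → u₁₋ as ξ → −∞, while v^s(ξ) → v₊ and u^s(ξ) → u₁₊ as ξ → +∞; (iv) (v^s)'(ξ) > 0 and (u^s)'(ξ) = −σ* (v^s)'(ξ) < 0; (v) v₋ < v^s(ξ) < v₊. -/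
open Filter Topology Set

/-!
Integrating the momentum equation once from `-∞` and substituting `u = u₊ + σ (v₊ - v)` reduces
the system to the scalar autonomous ODE `(2μ + λ) σ v' = p v₋ - p v - σ² (v - v₋)`. By the
Rankine–Hugoniot relation its right-hand side vanishes at `v₋` and `v₊`; it is positive in between
because the chord of the strictly convex `p` lies above its graph, and bounded by linear functions
vanishing at either endpoint because the graph lies above the tangents there. Hence the time
`ξ(v) = ∫ dv / v'` needed to reach either endpoint diverges logarithmically, and the inverse of
`ξ(v)` is a profile defined on all of `ℝ` with the right limits.
-/

section EndpointBlowUp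

variable {f f' : ℝ → ℝ} {a b c : ℝ}

theorem tendsto_nhdsGT_atBot_of_div_sub_le_deriv (hab : a < b) (hc : 0 < c)
    (hf : ∀ x ∈ Ioo a b, HasDerivAt f (f' x) x) (hf' : ∀ x ∈ Ioo a b, c / (x - a) ≤ f' x) :
    Tendsto f (𝓝[>] a) atBot := by
  have hm : (a + b) / 2 ∈ Ioo a b := ⟨by linarith, by linarith⟩
  set m := (a + b) / 2
  have hd : ∀ x ∈ Ioo a b,
      HasDerivAt (fun x => f x - c * Real.log (x - a)) (f' x - c / (x - a)) x := by
    intro x hx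
    have hlog := ((hasDerivAt_id x).sub_const a).log (sub_pos.2 hx.1).ne'
    exact ((hf x hx).sub (hlog.const_mul c)).congr_deriv (by simp [div_eq_mul_inv])
  have hmono : MonotoneOn (fun x => f x - c * Real.log (x - a)) (Ioo a b) := by
    refine monotoneOn_of_hasDerivWithinAt_nonneg (f' := fun x => f' x - c / (x - a))
      (convex_Ioo a b) (fun x hx => (hd x hx).continuousAt.continuousWithinAt) ?_ ?_ <;>
      rw [interior_Ioo]
    · exact fun x hx => (hd x hx).hasDerivWithinAt
    · exact fun x hx => sub_nonneg.2 (hf' x hx)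
  have hshift : Tendsto (fun x => x - a) (𝓝[>] a) (𝓝[>] 0) := by
    refine tendsto_nhdsWithin_iff.2
      ⟨?_, eventually_mem_nhdsWithin.mono fun x hx => sub_pos.2 (mem_Ioi.1 hx)⟩
    exact ((continuous_sub_right a).tendsto' a 0 (sub_self a)).mono_left nhdsWithin_le_nhds
  have hlog : Tendsto (fun x => f m - c * Real.log (m - a) + c * Real.log (x - a))
      (𝓝[>] a) atBot :=
    tendsto_atBot_add_const_left _ _ ((Real.tendsto_log_nhdsGT_zero.comp hshift).const_mul_atBot hc)
  refine tendsto_atBot_mono' _ ?_ hlog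
  filter_upwards [Ioo_mem_nhdsGT hm.1] with x hx
  have := hmono ⟨hx.1, hx.2.trans hm.2⟩ hm hx.2.le
  linarith

theorem tendsto_nhdsLT_atTop_of_div_sub_le_deriv (hab : a < b) (hc : 0 < c)
    (hf : ∀ x ∈ Ioo a b, HasDerivAt f (f' x) x) (hf' : ∀ x ∈ Ioo a b, c / (b - x) ≤ f' x) :
    Tendsto f (𝓝[<] b) atTop := by
  have hneg : ∀ x ∈ Ioo (-b) (-a), -x ∈ Ioo a b := fun x hx =>
    ⟨by linarith [hx.2], by linarith [hx.1]⟩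
  have h := tendsto_nhdsGT_atBot_of_div_sub_le_deriv (f := fun x => -f (-x))
    (f' := fun x => f' (-x)) (neg_lt_neg hab) hc
    (fun x hx => ((hf (-x) (hneg x hx)).comp x (hasDerivAt_neg x)).neg.congr_deriv (by ring))
    (fun x hx => by simpa [sub_eq_add_neg, add_comm] using hf' (-x) (hneg x hx))
  simpa [Function.comp_def] using (tendsto_neg_atBot_atTop.comp h).comp tendsto_neg_nhdsLT

end EndpointBlowUp

theorem hasDerivAt_integral_of_continuousOn_Ioo {E : Type*} [NormedAddCommGroup E]
    [NormedSpace ℝ E] [CompleteSpace E] {g : ℝ → E} {a b c x : ℝ}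
    (hg : ContinuousOn g (Ioo a b)) (hc : c ∈ Ioo a b) (hx : x ∈ Ioo a b) :
    HasDerivAt (fun y => ∫ t in c..y, g t) (g x) x :=
  intervalIntegral.integral_hasDerivAt_right
    ((hg.mono (ordConnected_Ioo.uIcc_subset hc hx)).intervalIntegrable)
    (hg.stronglyMeasurableAtFilter isOpen_Ioo x hx) (hg.continuousAt (isOpen_Ioo.mem_nhds hx))

theorem exists_hasDerivAt_inverse_of_tendsto {G G' : ℝ → ℝ} {a b : ℝ} (hab : a < b)
    (hG : ∀ x ∈ Ioo a b, HasDerivAt G (G' x) x) (hG' : ∀ x ∈ Ioo a b, 0 < G' x)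
    (hbot : Tendsto G (𝓝[>] a) atBot) (htop : Tendsto G (𝓝[<] b) atTop) :
    ∃ v : ℝ → ℝ, (∀ ξ, v ξ ∈ Ioo a b) ∧ (∀ ξ, HasDerivAt v (G' (v ξ))⁻¹ ξ) ∧
      Tendsto v atBot (𝓝 a) ∧ Tendsto v atTop (𝓝 b) := by
  have hcont : ContinuousOn G (Ioo a b) := fun x hx => (hG x hx).continuousAt.continuousWithinAt
  have hmono : StrictMonoOn G (Ioo a b) := by
    refine strictMonoOn_of_hasDerivWithinAt_pos (f' := G') (convex_Ioo a b) hcont ?_ ?_ <;>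
      rw [interior_Ioo]
    · exact fun x hx => (hG x hx).hasDerivWithinAt
    · exact hG'
  have hsurj : SurjOn G (Ioo a b) univ :=
    hcont.surjOn_of_tendsto (nonempty_Ioo.2 hab) ((tendsto_comp_coe_Ioo_atBot hab).2 hbot)
      ((tendsto_comp_coe_Ioo_atTop hab).2 htop)
  let e : Ioo a b ≃o ℝ := (hmono.orderIso _ _).trans <|
    (OrderIso.setCongr _ _ (univ_subset_iff.1 hsurj)).trans OrderIso.Set.univ
  have hGe : ∀ ξ, G (e.symm ξ) = ξ := e.apply_symm_apply
  refine ⟨fun ξ => e.symm ξ, fun ξ => (e.symm ξ).2, fun ξ => ?_, ?_, ?_⟩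
  · exact HasDerivAt.of_local_left_inverse
      (continuous_subtype_val.comp e.symm.continuous).continuousAt (hG _ (e.symm ξ).2)
      (hG' _ (e.symm ξ).2).ne' (Eventually.of_forall hGe)
  · exact (((tendsto_comp_coe_Ioo_atBot hab).2 tendsto_id).mono_right nhdsWithin_le_nhds).comp
      e.symm.tendsto_atBot
  · exact (((tendsto_comp_coe_Ioo_atTop hab).2 tendsto_id).mono_right nhdsWithin_le_nhds).comp
      e.symm.tendsto_atTop

theorem contDiff_succ_of_hasDerivAt_comp {F v : ℝ → ℝ} {s : Set ℝ} (n : ℕ)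
    (hF : ContDiffOn ℝ n F s) (hs : ∀ ξ, v ξ ∈ s) (hv : ∀ ξ, HasDerivAt v (F (v ξ)) ξ) :
    ContDiff ℝ (n + 1) v := by
  have hdiff : Differentiable ℝ v := fun ξ => (hv ξ).differentiableAt
  have hderiv : deriv v = F ∘ v := funext fun ξ => (hv ξ).deriv
  induction n with
  | zero =>
    simpa [contDiff_one_iff_deriv, hdiff, hderiv] using
      hF.continuousOn.comp_continuous hdiff.continuous hs
  | succ n ih =>
    rw [contDiff_succ_iff_deriv, hderiv]
    refine ⟨hdiff, by simp, hF.comp_contDiff ?_ hs⟩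
    exact_mod_cast ih (hF.of_le (by norm_cast; omega))

def profileField (p : ℝ → ℝ) (vm s v : ℝ) : ℝ := p vm - p v - s * (v - vm)

section ProfileField

variable {p : ℝ → ℝ} {vm vp s t : ℝ}

theorem profileField_pos (hp : StrictConvexOn ℝ (Icc vm vp) p) (hs : s * (vp - vm) = p vm - p vp)
    (ht : t ∈ Ioo vm vp) : 0 < profileField p vm s t := by
  have hvv : vm < vp := ht.1.trans ht.2
  have htm : 0 < t - vm := sub_pos.2 ht.1
  have hsec := hp.secant_strict_mono (left_mem_Icc.2 hvv.le) (Ioo_subset_Icc_self ht)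
    (right_mem_Icc.2 hvv.le) ht.1.ne' hvv.ne' ht.2
  have hslope : (p vp - p vm) / (vp - vm) = -s := by
    rw [div_eq_iff (sub_pos.2 hvv).ne']
    linarith
  rw [div_lt_iff₀ htm, hslope] at hsec
  unfold profileField
  linarith

theorem profileField_le_left (hp : ConvexOn ℝ (Icc vm vp) p) {d : ℝ} (hd : HasDerivAt p d vm)
    (ht : t ∈ Ioo vm vp) : profileField p vm s t ≤ -(d + s) * (t - vm) := by
  have h := hp.le_slope_of_hasDerivAt (left_mem_Icc.2 (ht.1.trans ht.2).le)
    (Ioo_subset_Icc_self ht) ht.1 hd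
  rw [slope_def_field, le_div_iff₀ (sub_pos.2 ht.1)] at h
  unfold profileField
  linarith

theorem profileField_le_right (hp : ConvexOn ℝ (Icc vm vp) p) (hs : s * (vp - vm) = p vm - p vp)
    {d : ℝ} (hd : HasDerivAt p d vp) (ht : t ∈ Ioo vm vp) :
    profileField p vm s t ≤ (d + s) * (vp - t) := by
  have h := hp.slope_le_of_hasDerivAt (Ioo_subset_Icc_self ht)
    (right_mem_Icc.2 (ht.1.trans ht.2).le) ht.2 hd
  rw [slope_def_field, div_le_iff₀ (sub_pos.2 ht.2)] at h
  unfold profileField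
  linear_combination h - hs

end ProfileField

theorem exists_heteroclinic_of_le_linear {F : ℝ → ℝ} {a b K₁ K₂ : ℝ} (hab : a < b)
    (hF : ContinuousOn F (Ioo a b)) (hpos : ∀ t ∈ Ioo a b, 0 < F t)
    (hK₁ : ∀ t ∈ Ioo a b, F t ≤ K₁ * (t - a)) (hK₂ : ∀ t ∈ Ioo a b, F t ≤ K₂ * (b - t)) :
    ∃ v : ℝ → ℝ, (∀ ξ, v ξ ∈ Ioo a b) ∧ (∀ ξ, HasDerivAt v (F (v ξ)) ξ) ∧
      Tendsto v atBot (𝓝 a) ∧ Tendsto v atTop (𝓝 b) := by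
  have hm : (a + b) / 2 ∈ Ioo a b := ⟨by linarith, by linarith⟩
  have hG : ∀ x ∈ Ioo a b, HasDerivAt (fun y => ∫ t in (a + b) / 2..y, (F t)⁻¹) (F x)⁻¹ x :=
    fun x hx => hasDerivAt_integral_of_continuousOn_Ioo
      (hF.inv₀ fun t ht => (hpos t ht).ne') hm hx
  have hK₁pos : 0 < K₁ :=
    (mul_pos_iff_of_pos_right (sub_pos.2 hm.1)).1 ((hpos _ hm).trans_le (hK₁ _ hm))
  have hK₂pos : 0 < K₂ :=
    (mul_pos_iff_of_pos_right (sub_pos.2 hm.2)).1 ((hpos _ hm).trans_le (hK₂ _ hm))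
  obtain ⟨v, hmem, hv, hbot, htop⟩ := exists_hasDerivAt_inverse_of_tendsto hab hG
    (fun x hx => inv_pos.2 (hpos x hx))
    (tendsto_nhdsGT_atBot_of_div_sub_le_deriv hab (inv_pos.2 hK₁pos) hG fun x hx => by
      rw [div_eq_mul_inv, ← mul_inv]; exact inv_anti₀ (hpos x hx) (hK₁ x hx))
    (tendsto_nhdsLT_atTop_of_div_sub_le_deriv hab (inv_pos.2 hK₂pos) hG fun x hx => by
      rw [div_eq_mul_inv, ← mul_inv]; exact inv_anti₀ (hpos x hx) (hK₂ x hx))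
  exact ⟨v, hmem, fun ξ => by simpa using hv ξ, hbot, htop⟩

theorem exists_shock_profile {p : ℝ → ℝ} {vm vp σ ν : ℝ} (hvmvp : vm < vp) (hσ : 0 < σ)
    (hν : 0 < ν) (hRH : σ ^ 2 * (vp - vm) = p vm - p vp) (hp : StrictConvexOn ℝ (Icc vm vp) p)
    (hpC : ContDiffOn ℝ 1 p (Ioo vm vp)) (hdm : DifferentiableAt ℝ p vm)
    (hdp : DifferentiableAt ℝ p vp) :
    ∃ v : ℝ → ℝ, ContDiff ℝ 2 v ∧ (∀ ξ, v ξ ∈ Ioo vm vp) ∧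
      (∀ ξ, HasDerivAt v (profileField p vm (σ ^ 2) (v ξ) / (ν * σ)) ξ) ∧
      Tendsto v atBot (𝓝 vm) ∧ Tendsto v atTop (𝓝 vp) := by
  have hνσ : 0 < ν * σ := mul_pos hν hσ
  have hFC : ContDiffOn ℝ 1 (fun t => profileField p vm (σ ^ 2) t / (ν * σ)) (Ioo vm vp) := by
    unfold profileField; fun_prop
  obtain ⟨v, hmem, hv, hbot, htop⟩ := exists_heteroclinic_of_le_linear hvmvp hFC.continuousOn
    (fun t ht => div_pos (profileField_pos hp hRH ht) hνσ)
    (K₁ := -(deriv p vm + σ ^ 2) / (ν * σ)) (K₂ := (deriv p vp + σ ^ 2) / (ν * σ))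
    (fun t ht => by
      rw [div_mul_eq_mul_div]
      exact div_le_div_of_nonneg_right (profileField_le_left hp.convexOn hdm.hasDerivAt ht) hνσ.le)
    (fun t ht => by
      rw [div_mul_eq_mul_div]
      exact div_le_div_of_nonneg_right (profileField_le_right hp.convexOn hRH hdp.hasDerivAt ht)
        hνσ.le)
  exact ⟨v, contDiff_succ_of_hasDerivAt_comp 1 hFC hmem hv, hmem, hv, hbot, htop⟩

theorem momentum_eq_of_hasDerivAt_profileField {p v : ℝ → ℝ} {vm vp up σ ν : ℝ} (hσ : σ ≠ 0)
    (hν : ν ≠ 0) (hp : ∀ ξ, DifferentiableAt ℝ p (v ξ))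
    (hv : ∀ ξ, HasDerivAt v (profileField p vm (σ ^ 2) (v ξ) / (ν * σ)) ξ) (ξ : ℝ) :
    -σ * deriv (fun η => up + σ * (vp - v η)) ξ + deriv (fun η => p (v η)) ξ =
      ν * deriv (deriv fun η => up + σ * (vp - v η)) ξ := by
  have hu : deriv (fun η => up + σ * (vp - v η)) =
      fun η => (p (v η) - p vm + σ ^ 2 * (v η - vm)) / ν := by
    funext η
    rw [((((hv η).const_sub vp).const_mul σ).const_add up).deriv]
    unfold profileField
    field_simp
    ring
  set v' := profileField p vm (σ ^ 2) (v ξ) / (ν * σ)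
  have hpv : HasDerivAt (fun η => p (v η)) (deriv p (v ξ) * v') ξ :=
    (hp ξ).hasDerivAt.comp ξ (hv ξ)
  have hu' : HasDerivAt (deriv fun η => up + σ * (vp - v η))
      ((deriv p (v ξ) + σ ^ 2) * v' / ν) ξ := by
    rw [hu]
    exact (((hpv.sub_const _).add (((hv ξ).sub_const vm).const_mul _)).div_const ν).congr_deriv
      (by ring)
  rw [hu'.deriv, hpv.deriv, hu]
  unfold v' profileField
  field_simp
  ring

theorem strictConvexOn_rpow_neg {γ : ℝ} (hγ : 0 < γ) :
    StrictConvexOn ℝ (Ioi 0) fun x : ℝ => x ^ (-γ) := by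
  refine StrictMonoOn.strictConvexOn_of_deriv (convex_Ioi 0)
    (fun x hx => (Real.continuousAt_rpow_const x _ (Or.inl (ne_of_gt hx))).continuousWithinAt) ?_
  rw [interior_Ioi]
  intro x hx y hy hxy
  simp only [Real.deriv_rpow_const]
  have := Real.rpow_lt_rpow_of_neg hx hxy (by linarith : -γ - 1 < 0)
  nlinarith

theorem stmt13 (γ μ lam vm vp up σs um : ℝ) (hγ : 1 < γ) (hμ : 0 < μ)
    (hlam : 0 ≤ 2 * μ + 3 * lam) (hvm : 0 < vm) (hvmvp : vm < vp)
    (hσs : σs = Real.sqrt ((vm ^ (-γ) - vp ^ (-γ)) / (vp - vm)))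
    (hum : um = up + σs * (vp - vm)) :
    ∃ vs us : ℝ → ℝ, ContDiff ℝ 2 vs ∧ ContDiff ℝ 2 us ∧
      (∀ ξ : ℝ, -σs * deriv vs ξ = deriv us ξ) ∧
      (∀ ξ : ℝ, -σs * deriv us ξ + deriv (fun x => (vs x) ^ (-γ)) ξ =
        (2 * μ + lam) * deriv (deriv us) ξ) ∧
      Tendsto vs atBot (𝓝 vm) ∧ Tendsto us atBot (𝓝 um) ∧
      Tendsto vs atTop (𝓝 vp) ∧ Tendsto us atTop (𝓝 up) ∧
      (∀ ξ : ℝ, 0 < deriv vs ξ) ∧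
      (∀ ξ : ℝ, deriv us ξ = -σs * deriv vs ξ ∧ deriv us ξ < 0) ∧
      (∀ ξ : ℝ, vm < vs ξ ∧ vs ξ < vp) := by
  have hν : 0 < 2 * μ + lam := by linarith
  have hp : StrictConvexOn ℝ (Icc vm vp) fun x : ℝ => x ^ (-γ) :=
    (strictConvexOn_rpow_neg (by linarith)).subset (fun x hx => hvm.trans_le hx.1) (convex_Icc _ _)
  have hpd : ∀ x : ℝ, 0 < x → DifferentiableAt ℝ (fun x : ℝ => x ^ (-γ)) x := fun x hx =>
    (Real.hasDerivAt_rpow_const (Or.inl hx.ne')).differentiableAt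
  have hslope : 0 < (vm ^ (-γ) - vp ^ (-γ)) / (vp - vm) :=
    div_pos (sub_pos.2 (Real.rpow_lt_rpow_of_neg hvm hvmvp (by linarith))) (sub_pos.2 hvmvp)
  have hσ : 0 < σs := hσs ▸ Real.sqrt_pos.2 hslope
  have hRH : σs ^ 2 * (vp - vm) = vm ^ (-γ) - vp ^ (-γ) := by
    rw [hσs, Real.sq_sqrt hslope.le, div_mul_cancel₀ _ (sub_pos.2 hvmvp).ne']
  obtain ⟨vs, hC2, hmem, hv, hbot, htop⟩ := exists_shock_profile hvmvp hσ hν hRH hp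
    (fun x hx => (Real.contDiffAt_rpow_const_of_ne (hvm.trans hx.1).ne').contDiffWithinAt)
    (hpd vm hvm) (hpd vp (hvm.trans hvmvp))
  have hvs' : ∀ ξ, 0 < deriv vs ξ := fun ξ =>
    (hv ξ).deriv ▸ div_pos (profileField_pos hp hRH (hmem ξ)) (mul_pos hν hσ)
  have hus' : ∀ ξ, deriv (fun η => up + σs * (vp - vs η)) ξ = -σs * deriv vs ξ := fun ξ =>
    ((((hv ξ).const_sub vp).const_mul σs).const_add up).deriv.trans (by rw [(hv ξ).deriv]; ring)
  refine ⟨vs, fun η => up + σs * (vp - vs η), hC2, by fun_prop, fun ξ => (hus' ξ).symm,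
    momentum_eq_of_hasDerivAt_profileField hσ.ne' hν.ne'
      (fun ξ => hpd _ (hvm.trans (hmem ξ).1)) hv, hbot, ?_, htop, ?_, hvs',
    fun ξ => ⟨hus' ξ, (hus' ξ).trans_lt (by nlinarith [hvs' ξ])⟩, hmem⟩
  · simpa [hum] using ((tendsto_const_nhds.sub hbot).const_mul σs).const_add up
  · simpa using ((tendsto_const_nhds (x := vp).sub htop).const_mul σs).const_add up
end

section
/- Fix γ > 1 and v₋ > 0, and set σ₋ = √(γ v₋^{−γ−1}). There exist constants C > 0 and δ₀ > 0 such that for every v₊ > v₋ with 0 < δ := p(v₋) − p(v₊) ≤ δ₀, setting σ* = √( (p(v₋) − p(v₊)) / (v₊ − v₋) ), for every v with v₋ < v < v₊ one has | (δ / (σ* (v₊ − v₋))) · ( (v − v₋)/(p(v) − p(v₋)) + (v − v₊)/(p(v₊) − p(v)) ) − δ · p''(v₋) / (2 σ₋ (p'(v₋))²) | ≤ C δ². -/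
/-!
Let `h = v₊ - v₋` and let `M₁, M₂, M` be minus the slopes of `p` on `[v₋, v]`, `[v, v₊]` and
`[v₋, v₊]`. Then `δ = M h`, `σ* = √M`, and the quantity in the absolute value is
`√M (M₁ - M₂) / (M₁ M₂) - M h p''(v₋) / (2 σ₋ p'(v₋)²)`. A third-order Taylor expansion gives
`slope p a b = p'(v₋) + p''(v₋) ((a + b) / 2 - v₋) + O(h²)` for `v₋ ≤ a < b ≤ v₊`, hence
`M₁ - M₂ = p''(v₋) h / 2 + O(h²)` while `M₁, M₂, M = σ₋² + O(h)`. So the two terms agree up to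
`O(h²)`, and `h = O(δ)`.
-/

open Real Set

section Taylor

variable {f f' f'' f''' : ℝ → ℝ} {x₀ b K : ℝ}

theorem abs_deriv_sub_taylor_le (hf' : ∀ x ∈ Icc x₀ b, HasDerivAt f' (f'' x) x)
    (hf'' : ∀ x ∈ Icc x₀ b, HasDerivAt f'' (f''' x) x) (hK : ∀ x ∈ Icc x₀ b, |f''' x| ≤ K)
    {x : ℝ} (hx : x ∈ Icc x₀ b) :
    |f' x - f' x₀ - f'' x₀ * (x - x₀)| ≤ K * (b - x₀) ^ 2 := by
  have hK0 : 0 ≤ K := (abs_nonneg _).trans (hK x₀ (left_mem_Icc.2 (hx.1.trans hx.2)))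
  have hf''_lip : ∀ y ∈ Icc x₀ b, |f'' y - f'' x₀| ≤ K * (y - x₀) :=
    norm_image_sub_le_of_norm_deriv_le_segment' (fun y hy ↦ (hf'' y hy).hasDerivWithinAt)
      (fun y hy ↦ hK y (Ico_subset_Icc_self hy))
  have key := norm_image_sub_le_of_norm_deriv_le_segment' (C := K * (b - x₀))
    (f := fun y ↦ f' y - f'' x₀ * y)
    (fun y hy ↦ ((hf' y hy).sub ((hasDerivAt_id y).const_mul (f'' x₀))).hasDerivWithinAt)
    (fun y hy ↦ by
      simpa using (hf''_lip y (Ico_subset_Icc_self hy)).trans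
        (mul_le_mul_of_nonneg_left (by linarith [hy.2]) hK0)) x hx
  calc |f' x - f' x₀ - f'' x₀ * (x - x₀)| = ‖f' x - f'' x₀ * x - (f' x₀ - f'' x₀ * x₀)‖ := by
        rw [Real.norm_eq_abs]; ring_nf
    _ ≤ K * (b - x₀) * (x - x₀) := key
    _ ≤ K * (b - x₀) * (b - x₀) :=
        mul_le_mul_of_nonneg_left (by linarith [hx.2]) (mul_nonneg hK0 (by linarith [hx.1, hx.2]))
    _ = K * (b - x₀) ^ 2 := by ring

theorem abs_slope_sub_taylor_le (hf : ∀ x ∈ Icc x₀ b, HasDerivAt f (f' x) x)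
    (hf' : ∀ x ∈ Icc x₀ b, HasDerivAt f' (f'' x) x)
    (hf'' : ∀ x ∈ Icc x₀ b, HasDerivAt f'' (f''' x) x) (hK : ∀ x ∈ Icc x₀ b, |f''' x| ≤ K)
    {a : ℝ} (ha : x₀ ≤ a) (hab : a < b) :
    |slope f a b - (f' x₀ + f'' x₀ * ((a + b) / 2 - x₀))| ≤ K * (b - x₀) ^ 2 := by
  have hsub : Icc a b ⊆ Icc x₀ b := Icc_subset_Icc_left ha
  have key := norm_image_sub_le_of_norm_deriv_le_segment' (C := K * (b - x₀) ^ 2)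
    (f := fun y ↦ f y - f' x₀ * y - f'' x₀ / 2 * (y - x₀) ^ 2)
    (fun y hy ↦ by
      refine (((hf y (hsub hy)).sub ((hasDerivAt_id' y).const_mul (f' x₀))).sub
        ((((hasDerivAt_id' y).sub_const x₀).pow 2).const_mul (f'' x₀ / 2)))
        |>.congr_deriv ?_ |>.hasDerivWithinAt
      push_cast; ring)
    (fun y hy ↦ abs_deriv_sub_taylor_le hf' hf'' hK (hsub (Ico_subset_Icc_self hy)))
    b (right_mem_Icc.2 hab.le)
  have hba : 0 < b - a := sub_pos.2 hab
  rw [← mul_le_mul_iff_of_pos_right hba]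
  calc |slope f a b - (f' x₀ + f'' x₀ * ((a + b) / 2 - x₀))| * (b - a)
      = |(slope f a b - (f' x₀ + f'' x₀ * ((a + b) / 2 - x₀))) * (b - a)| := by
        rw [abs_mul, abs_of_pos hba]
    _ = ‖f b - f' x₀ * b - f'' x₀ / 2 * (b - x₀) ^ 2
          - (f a - f' x₀ * a - f'' x₀ / 2 * (a - x₀) ^ 2)‖ := by
        rw [Real.norm_eq_abs, slope_def_field]
        congr 1
        field_simp
        ring
    _ ≤ K * (b - x₀) ^ 2 * (b - a) := key

end Taylor

theorem abs_sqrt_sub_sqrt_le {x y : ℝ} (hx : 0 ≤ x) (hy : 0 < y) :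
    |√x - √y| ≤ |x - y| / √y := by
  have hy' : 0 < √y := sqrt_pos.2 hy
  have hprod : (√x - √y) * (√x + √y) = x - y := by
    nlinarith [sq_sqrt hx, sq_sqrt hy.le]
  rw [le_div_iff₀ hy', ← hprod, abs_mul, abs_of_pos (by positivity : 0 < √x + √y)]
  gcongr
  linarith [sqrt_nonneg x]

theorem abs_inv_mul_sub_inv_sq_le {a x y ε : ℝ} (ha : 0 < a) (hε : ε ≤ a / 2)
    (hx : |x - a| ≤ ε) (hy : |y - a| ≤ ε) :
    |(x * y)⁻¹ - (a ^ 2)⁻¹| ≤ 10 * ε / a ^ 3 := by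
  rw [abs_le] at hx hy
  have hε0 : 0 ≤ ε := by linarith
  have hxy : a ^ 2 / 4 ≤ x * y := by nlinarith
  have hxy0 : 0 < x * y := by nlinarith
  rw [inv_sub_inv hxy0.ne' (by positivity), abs_div, abs_of_pos (by positivity : 0 < x * y * a ^ 2),
    div_le_div_iff₀ (by positivity) (by positivity)]
  have hnum : |a ^ 2 - x * y| ≤ 5 / 2 * a * ε := by
    rw [abs_le]; constructor <;> nlinarith
  calc |a ^ 2 - x * y| * a ^ 3 ≤ 5 / 2 * a * ε * a ^ 3 := by gcongr
    _ = 10 * ε * (a ^ 2 / 4 * a ^ 2) := by ring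
    _ ≤ 10 * ε * (x * y * a ^ 2) := by gcongr

theorem abs_sub_le_of_abs_sub_sub_mul_le {A B K h m N : ℝ} (hB : 0 ≤ B) (hK : 0 ≤ K)
    (hm₀ : 0 ≤ m) (hm : m ≤ h) (hh₁ : h ≤ 1) (hN : |N - (A - B * m)| ≤ K * h ^ 2) :
    |N - A| ≤ (B + K) * h := by
  have hKh : K * h ^ 2 ≤ K * h := mul_le_mul_of_nonneg_left (by nlinarith) hK
  rw [abs_le] at hN ⊢
  constructor <;> nlinarith

theorem abs_sqrt_mul_div_sub_le {A d ε η M₁ M₂ M : ℝ} (hA : 0 < A) (hd : 0 ≤ d)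
    (hε : ε ≤ A / 2) (h₁ : |M₁ - A| ≤ ε) (h₂ : |M₂ - A| ≤ ε) (hM : |M - A| ≤ ε)
    (hdiff : |M₁ - M₂ - d| ≤ η) :
    |√M * (M₁ - M₂) / (M₁ * M₂) - M * d / (√A * A ^ 2)| ≤
      2 * √A * (4 * η / A ^ 2 + 11 * d * ε / A ^ 3) := by
  have hF := abs_inv_mul_sub_inv_sq_le hA hε h₁ h₂
  have hsq : |√M - √A| ≤ ε / √A := by
    have hM0 : 0 ≤ M := by rw [abs_le] at hM; linarith
    exact (abs_sqrt_sub_sqrt_le hM0 hA).trans (by gcongr)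
  rw [abs_le] at h₁ h₂ hM
  have hM₁0 : 0 < M₁ := by linarith
  have hM₂0 : 0 < M₂ := by linarith
  have hM0 : 0 ≤ M := by linarith
  have hF₀ : (M₁ * M₂)⁻¹ ≤ 4 / A ^ 2 := by
    rw [← inv_div]
    exact inv_anti₀ (by positivity) (by nlinarith)
  have hsA : 0 < √A := sqrt_pos.2 hA
  have hsM : √M ≤ 2 * √A := by
    rw [show 2 * √A = √(2 ^ 2 * A) by rw [sqrt_mul (by norm_num), sqrt_sq (by norm_num)]]
    exact sqrt_le_sqrt (by linarith)
  have hdecomp : √M * (M₁ - M₂) / (M₁ * M₂) - M * d / (√A * A ^ 2) =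
      √M * ((M₁ - M₂ - d) * (M₁ * M₂)⁻¹ + d * ((M₁ * M₂)⁻¹ - (A ^ 2)⁻¹)
        + d * ((√A - √M) / (√A * A ^ 2))) := by
    field_simp
    linear_combination M₁ * M₂ * d * sq_sqrt hM0
  have t₁ : |(M₁ - M₂ - d) * (M₁ * M₂)⁻¹| ≤ η * (4 / A ^ 2) := by
    rw [abs_mul, abs_of_pos (by positivity : 0 < (M₁ * M₂)⁻¹)]
    exact mul_le_mul hdiff hF₀ (by positivity) ((abs_nonneg _).trans hdiff)
  have t₂ : |d * ((M₁ * M₂)⁻¹ - (A ^ 2)⁻¹)| ≤ d * (10 * ε / A ^ 3) := by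
    rw [abs_mul, abs_of_nonneg hd]
    gcongr
  have t₃ : |d * ((√A - √M) / (√A * A ^ 2))| ≤ d * (ε / A ^ 3) := by
    rw [abs_mul, abs_of_nonneg hd, abs_div, abs_sub_comm,
      abs_of_pos (by positivity : 0 < √A * A ^ 2)]
    refine mul_le_mul_of_nonneg_left ?_ hd
    calc |√M - √A| / (√A * A ^ 2) ≤ ε / √A / (√A * A ^ 2) := by gcongr
      _ = ε / A ^ 3 := by
        rw [div_div, ← mul_assoc, mul_self_sqrt hA.le]
        ring
  rw [hdecomp, abs_mul, abs_of_nonneg (sqrt_nonneg M)]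
  calc _ ≤ 2 * √A * (η * (4 / A ^ 2) + d * (10 * ε / A ^ 3) + d * (ε / A ^ 3)) := by
        gcongr
        exact (abs_add_le _ _).trans (add_le_add ((abs_add_le _ _).trans (add_le_add t₁ t₂)) t₃)
    _ = 2 * √A * (4 * η / A ^ 2 + 11 * d * ε / A ^ 3) := by ring

noncomputable def shockConst (A B K : ℝ) : ℝ := √A * (16 * K / A ^ 2 + 11 * B * (B + K) / A ^ 3)

theorem abs_sqrt_mul_div_sub_le_shockConst_mul_sq {A B K h t M₁ M₂ M : ℝ} (hA : 0 < A)
    (hB : 0 ≤ B) (hK : 0 ≤ K) (hh : 0 < h) (hh₁ : h ≤ 1) (hsmall : (B + K) * h ≤ A / 2)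
    (ht₀ : 0 ≤ t) (ht : t ≤ h) (h₁ : |M₁ - (A - B * (t / 2))| ≤ K * h ^ 2)
    (h₂ : |M₂ - (A - B * ((t + h) / 2))| ≤ K * h ^ 2) (hM : |M - (A - B * (h / 2))| ≤ K * h ^ 2) :
    |√M * (M₁ - M₂) / (M₁ * M₂) - M * h * B / (2 * √A * A ^ 2)| ≤ shockConst A B K * h ^ 2 := by
  have hdiff : |M₁ - M₂ - B * (h / 2)| ≤ 2 * (K * h ^ 2) := by
    rw [abs_le] at h₁ h₂ ⊢; constructor <;> linarith
  have key := abs_sqrt_mul_div_sub_le hA (by positivity) hsmall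
    (abs_sub_le_of_abs_sub_sub_mul_le hB hK (by positivity) (by linarith) hh₁ h₁)
    (abs_sub_le_of_abs_sub_sub_mul_le hB hK (by positivity) (by linarith) hh₁ h₂)
    (abs_sub_le_of_abs_sub_sub_mul_le hB hK (by positivity) (by linarith) hh₁ hM) hdiff
  calc _ = |√M * (M₁ - M₂) / (M₁ * M₂) - M * (B * (h / 2)) / (√A * A ^ 2)| := by ring_nf
    _ ≤ _ := key
    _ = shockConst A B K * h ^ 2 := by rw [shockConst]; ring

theorem sub_eq_neg_slope_mul (f : ℝ → ℝ) {a b : ℝ} (hab : a ≠ b) :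
    f a - f b = -slope f a b * (b - a) := by
  rw [slope_def_field]
  field_simp [sub_ne_zero.2 hab.symm]
  ring

theorem shock_expansion_eq {f : ℝ → ℝ} {x₀ v x₁ : ℝ} (hv : x₀ < v) (hv₁ : v < x₁)
    (hs : slope f x₀ x₁ < 0) (hs₁ : slope f x₀ v ≠ 0) (hs₂ : slope f v x₁ ≠ 0) :
    (f x₀ - f x₁) / (√((f x₀ - f x₁) / (x₁ - x₀)) * (x₁ - x₀)) *
        ((v - x₀) / (f v - f x₀) + (v - x₁) / (f x₁ - f v)) =
      √(-slope f x₀ x₁) * (-slope f x₀ v - -slope f v x₁) / (-slope f x₀ v * -slope f v x₁) := by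
  have hv₀ : v - x₀ ≠ 0 := by linarith
  have hv₁' : x₁ - v ≠ 0 := by linarith
  have hx₁ : x₁ - x₀ ≠ 0 := by linarith
  have hsM : √(-slope f x₀ x₁) ≠ 0 := (sqrt_pos.2 (neg_pos.2 hs)).ne'
  rw [sub_eq_neg_slope_mul f (hv.trans hv₁).ne, ← neg_sub (f x₀), sub_eq_neg_slope_mul f hv.ne,
    ← neg_sub (f v), sub_eq_neg_slope_mul f hv₁.ne, mul_div_cancel_right₀ _ hx₁]
  field_simp
  rw [sq_sqrt (neg_pos.2 hs).le]
  ring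

theorem abs_shock_expansion_sub_le {f : ℝ → ℝ} {x₀ A B K h₀ : ℝ} (hA : 0 < A) (hB : 0 ≤ B)
    (hK : 0 ≤ K) (hh₀ : h₀ ≤ 1) (hsmall : (B + K) * h₀ ≤ A / 2)
    (hf : ∀ a b, x₀ ≤ a → a < b →
      |slope f a b - (-A + B * ((a + b) / 2 - x₀))| ≤ K * (b - x₀) ^ 2)
    {v x₁ : ℝ} (hv : x₀ < v) (hv₁ : v < x₁) (hx₁ : x₁ - x₀ ≤ h₀) :
    |(f x₀ - f x₁) / (√((f x₀ - f x₁) / (x₁ - x₀)) * (x₁ - x₀)) *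
        ((v - x₀) / (f v - f x₀) + (v - x₁) / (f x₁ - f v)) -
      (f x₀ - f x₁) * B / (2 * √A * A ^ 2)| ≤
      4 * shockConst A B K / A ^ 2 * (f x₀ - f x₁) ^ 2 := by
  have hh : 0 < x₁ - x₀ := by linarith
  have hh₁ : x₁ - x₀ ≤ 1 := hx₁.trans hh₀
  have bound : ∀ a b, x₀ ≤ a → a < b → b ≤ x₁ →
      |-slope f a b - (A - B * ((a + b) / 2 - x₀))| ≤ K * (x₁ - x₀) ^ 2 := by
    intro a b ha hab hb
    rw [← abs_neg, show -(-slope f a b - (A - B * ((a + b) / 2 - x₀)))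
      = slope f a b - (-A + B * ((a + b) / 2 - x₀)) by ring]
    exact (hf a b ha hab).trans (by gcongr; linarith)
  have h₁ := bound x₀ v le_rfl hv hv₁.le
  have h₂ := bound v x₁ hv.le hv₁ le_rfl
  have hM := bound x₀ x₁ le_rfl (hv.trans hv₁) le_rfl
  rw [show (x₀ + v) / 2 - x₀ = (v - x₀) / 2 by ring] at h₁
  rw [show (v + x₁) / 2 - x₀ = (v - x₀ + (x₁ - x₀)) / 2 by ring] at h₂
  rw [show (x₀ + x₁) / 2 - x₀ = (x₁ - x₀) / 2 by ring] at hM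
  have half_le : ∀ N m, 0 ≤ m → m ≤ x₁ - x₀ → |N - (A - B * m)| ≤ K * (x₁ - x₀) ^ 2 →
      A / 2 ≤ N := by
    intro N m hm₀ hm hN
    have hN' := abs_sub_le_of_abs_sub_sub_mul_le hB hK hm₀ hm hh₁ hN
    rw [abs_le] at hN'
    nlinarith
  have hM₁ := half_le _ _ (by linarith) (by linarith) h₁
  have hM₂ := half_le _ _ (by linarith) (by linarith) h₂
  have hM₀ := half_le _ _ (by linarith) (by linarith) hM
  rw [shock_expansion_eq hv hv₁ (by linarith) (by linarith : slope f x₀ v < 0).ne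
      (by linarith : slope f v x₁ < 0).ne,
    sub_eq_neg_slope_mul f (hv.trans hv₁).ne]
  have hC : 0 ≤ shockConst A B K := by unfold shockConst; positivity
  calc _ ≤ shockConst A B K * (x₁ - x₀) ^ 2 :=
        abs_sqrt_mul_div_sub_le_shockConst_mul_sq hA hB hK hh hh₁
          ((mul_le_mul_of_nonneg_left hx₁ (by positivity)).trans hsmall) (by linarith)
          (by linarith) h₁ h₂ hM
    _ = 4 * shockConst A B K / A ^ 2 * ((A / 2) * (x₁ - x₀)) ^ 2 := by field_simp; ring
    _ ≤ 4 * shockConst A B K / A ^ 2 * (-slope f x₀ x₁ * (x₁ - x₀)) ^ 2 := by gcongr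

theorem abs_slope_rpow_neg_sub_le {γ x₀ a b : ℝ} (hγ : 0 ≤ γ) (hx₀ : 0 < x₀) (ha : x₀ ≤ a)
    (hab : a < b) :
    |slope (fun x ↦ x ^ (-γ)) a b -
        (-(γ * x₀ ^ (-γ - 1)) + γ * (γ + 1) * x₀ ^ (-γ - 2) * ((a + b) / 2 - x₀))| ≤
      γ * (γ + 1) * (γ + 2) * x₀ ^ (-γ - 3) * (b - x₀) ^ 2 := by
  have hpos : ∀ x ∈ Icc x₀ b, 0 < x := fun x hx ↦ hx₀.trans_le hx.1
  refine abs_slope_sub_taylor_le (f' := fun x ↦ -(γ * x ^ (-γ - 1)))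
    (f'' := fun x ↦ γ * (γ + 1) * x ^ (-γ - 2))
    (f''' := fun x ↦ -(γ * (γ + 1) * (γ + 2)) * x ^ (-γ - 3)) (fun x hx ↦ ?_) (fun x hx ↦ ?_)
    (fun x hx ↦ ?_) (fun x hx ↦ ?_) ha hab
  · exact (hasDerivAt_rpow_const (Or.inl (hpos x hx).ne')).congr_deriv (by ring)
  · refine (((hasDerivAt_rpow_const (Or.inl (hpos x hx).ne')).const_mul γ).neg).congr_deriv ?_
    rw [show -γ - 1 - 1 = -γ - 2 by ring]
    ring
  · refine ((hasDerivAt_rpow_const (Or.inl (hpos x hx).ne')).const_mul (γ * (γ + 1))).congr_deriv ?_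
    rw [show -γ - 2 - 1 = -γ - 3 by ring]
    ring
  · rw [abs_mul, abs_neg, abs_of_nonneg (by positivity), abs_of_pos (rpow_pos_of_pos (hpos x hx) _)]
    exact mul_le_mul_of_nonneg_left (rpow_le_rpow_of_nonpos hx₀ hx.1 (by linarith)) (by positivity)

theorem stmt16 (γ vm σm : ℝ) (hγ : 1 < γ) (hvm : 0 < vm)
    (hσm : σm = Real.sqrt (γ * vm ^ (-γ - 1))) :
    ∃ C > (0:ℝ), ∃ δ₀ > (0:ℝ), ∀ vp : ℝ, vm < vp →
      ∀ δ : ℝ, δ = vm ^ (-γ) - vp ^ (-γ) → 0 < δ → δ ≤ δ₀ →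
        ∀ σs : ℝ, σs = Real.sqrt ((vm ^ (-γ) - vp ^ (-γ)) / (vp - vm)) →
          ∀ v : ℝ, vm < v → v < vp →
            |δ / (σs * (vp - vm)) *
                ((v - vm) / (v ^ (-γ) - vm ^ (-γ)) + (v - vp) / (vp ^ (-γ) - v ^ (-γ))) -
              δ * (γ * (γ + 1) * vm ^ (-γ - 2)) /
                (2 * σm * (-(γ * vm ^ (-γ - 1))) ^ 2)| ≤ C * δ ^ 2 := by
  subst hσm
  have hγ₀ : 0 < γ := by linarith
  set A := γ * vm ^ (-γ - 1)
  set B := γ * (γ + 1) * vm ^ (-γ - 2)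
  set K := γ * (γ + 1) * (γ + 2) * vm ^ (-γ - 3)
  have hA : 0 < A := by positivity
  have hB : 0 < B := by positivity
  have hK : 0 < K := by positivity
  set h₀ := min 1 (A / (2 * (B + K)))
  have hh₀ : 0 < h₀ := lt_min one_pos (by positivity)
  have hsmall : (B + K) * h₀ ≤ A / 2 :=
    (mul_le_mul_of_nonneg_left (min_le_right _ _) (by positivity)).trans_eq (by field_simp)
  refine ⟨4 * shockConst A B K / A ^ 2, by unfold shockConst; positivity,
    vm ^ (-γ) - (vm + h₀) ^ (-γ), sub_pos.2 (rpow_lt_rpow_of_neg hvm (by linarith) (by linarith)),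
    ?_⟩
  rintro vp - _ rfl - hδ₀ _ rfl v hv hvvp
  have hh : vp - vm ≤ h₀ := by
    by_contra! hlt
    linarith [rpow_lt_rpow_of_neg (by linarith) (by linarith : vm + h₀ < vp) (by linarith : -γ < 0)]
  rw [neg_sq]
  exact abs_shock_expansion_sub_le hA hB.le hK.le (min_le_left _ _) hsmall
    (fun a b ha hab ↦ abs_slope_rpow_neg_sub_le hγ₀.le hvm ha hab) hv hvvp hh
end
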